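/- arXiv:2303.02497 — 5 statements merged into one kernel-verified Lean document; each statement's English description precedes it below -/
import Mathlib

section
/- The sum sin(2π/7) + sin(4π/7) + sin(8π/7) equals √7/2. -/
/-!
Put `S = sin(2π/7) + sin(4π/7) + sin(8π/7)`. Squaring and using the product-to-sum formulas,
the cross terms cancel in pairs because `cos(2π - x) = cos x`, leaving
`S² = 3/2 - (cos(2π/7) + cos(4π/7) + cos(8π/7))/2`. That cosine sum is half the sum of the real
parts of the nontrivial seventh roots of unity, i.e. `-1/2`, so `S² = 7/4`. Finally `S > 0`,
since `sin(8π/7) = -sin(π/7)` is outweighed by `sin(2π/7)`.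
-/

open Real Finset

theorem Real.sum_range_cos_two_pi_mul_div {n : ℕ} (hn : 1 < n) :
    ∑ k ∈ range n, cos (2 * π * k / n) = 0 := by
  have hζ := Complex.isPrimitiveRoot_exp n (by omega)
  have h := congrArg Complex.re (hζ.geom_sum_eq_zero hn)
  rw [Complex.re_sum, Complex.zero_re] at h
  convert h using 2 with k
  rw [← Complex.exp_nat_mul, ← Complex.exp_ofReal_mul_I_re]
  push_cast
  ring_nf

theorem Real.cos_eq_cos_of_add_eq_two_pi {x y : ℝ} (h : x + y = 2 * π) : cos x = cos y := by
  rw [← cos_two_pi_sub, ← h, add_sub_cancel_left]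

theorem cos_sum_seventh : cos (2 * π / 7) + cos (4 * π / 7) + cos (8 * π / 7) = -1 / 2 := by
  have hsum := sum_range_cos_two_pi_mul_div (n := 7) (by norm_num)
  simp only [sum_range_succ, range_zero, sum_empty] at hsum
  push_cast at hsum
  have h12 : cos (12 * π / 7) = cos (2 * π / 7) := cos_eq_cos_of_add_eq_two_pi (by ring)
  have h10 : cos (10 * π / 7) = cos (4 * π / 7) := cos_eq_cos_of_add_eq_two_pi (by ring)
  have h8 : cos (8 * π / 7) = cos (6 * π / 7) := cos_eq_cos_of_add_eq_two_pi (by ring)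
  -- `ring_nf` writes every angle as `π * (k / 7)`, so equal cosines become equal atoms.
  ring_nf at hsum h12 h10 h8 ⊢
  rw [cos_zero] at hsum
  linear_combination (hsum - h12 - h10 + h8) / 2

theorem sin_sum_seventh_sq :
    (sin (2 * π / 7) + sin (4 * π / 7) + sin (8 * π / 7)) ^ 2 = 7 / 4 := by
  have hcos := cos_sum_seventh
  have h12 : cos (12 * π / 7) = cos (2 * π / 7) := cos_eq_cos_of_add_eq_two_pi (by ring)
  have h10 : cos (10 * π / 7) = cos (4 * π / 7) := cos_eq_cos_of_add_eq_two_pi (by ring)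
  have h16 : cos (16 * π / 7) = cos (2 * π / 7) := by
    rw [show 16 * π / 7 = 2 * π / 7 + 2 * π by ring, cos_add_two_pi]
  have sq₁ := sin_sq_eq_half_sub (2 * π / 7)
  have sq₂ := sin_sq_eq_half_sub (4 * π / 7)
  have sq₃ := sin_sq_eq_half_sub (8 * π / 7)
  have prod₁₂ := two_mul_sin_mul_sin (4 * π / 7) (2 * π / 7)
  have prod₂₃ := two_mul_sin_mul_sin (8 * π / 7) (4 * π / 7)
  have prod₁₃ := two_mul_sin_mul_sin (8 * π / 7) (2 * π / 7)
  ring_nf at hcos h12 h10 h16 sq₁ sq₂ sq₃ prod₁₂ prod₂₃ prod₁₃ ⊢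
  linear_combination sq₁ + sq₂ + sq₃ + prod₁₂ + prod₂₃ + prod₁₃ - h12 - h10 - h16 / 2 - hcos / 2

theorem sin_sum_seventh_pos : 0 < sin (2 * π / 7) + sin (4 * π / 7) + sin (8 * π / 7) := by
  have h8 : sin (8 * π / 7) = -sin (π / 7) := by
    rw [show 8 * π / 7 = π / 7 + π by ring, sin_add_pi]
  have h2 : sin (π / 7) < sin (2 * π / 7) :=
    sin_lt_sin_of_lt_of_le_pi_div_two (by linarith [pi_pos]) (by linarith [pi_pos])
      (by linarith [pi_pos])
  have h4 : 0 < sin (4 * π / 7) := sin_pos_of_pos_of_lt_pi (by positivity) (by linarith [pi_pos])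
  linarith

theorem sin_sum_seventh :
    Real.sin (2 * Real.pi / 7) + Real.sin (4 * Real.pi / 7) + Real.sin (8 * Real.pi / 7)
      = Real.sqrt 7 / 2 := by
  refine (sq_eq_sq₀ sin_sum_seventh_pos.le (by positivity)).1 ?_
  rw [sin_sum_seventh_sq, div_pow, sq_sqrt (by norm_num)]
  norm_num
end

section
/- Let K ⊆ L be a field extension of odd finite degree with char K ≠ 2, and let a, b ∈ K be nonzero. Then the quaternion algebra ℍ[L, a, b] is a division ring if and only if ℍ[K, a, b] is a division ring. -/
open Quaternion

namespace SpringerAux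

open Polynomial Module IntermediateField

/-- Anisotropy of the quaternion norm form `⟨1, -a, -b, ab⟩`. -/
def Aniso (F : Type*) [Field F] (a b : F) : Prop :=
  ∀ x y z w : F, x ^ 2 - a * y ^ 2 - b * z ^ 2 + a * b * w ^ 2 = 0 →
    x = 0 ∧ y = 0 ∧ z = 0 ∧ w = 0

lemma map_form {F G : Type*} [Field F] [Field G] (φ : F →+* G) (a b x y z w : F) :
    φ (x ^ 2 - a * y ^ 2 - b * z ^ 2 + a * b * w ^ 2) =
      φ x ^ 2 - φ a * φ y ^ 2 - φ b * φ z ^ 2 + φ a * φ b * φ w ^ 2 := by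
  simp [map_add, map_sub, map_mul, map_pow]

lemma aniso_comap {F G : Type*} [Field F] [Field G] (φ : F →+* G) {a b : F}
    (h : Aniso G (φ a) (φ b)) : Aniso F a b := by
  intro x y z w hq
  obtain ⟨h1, h2, h3, h4⟩ := h (φ x) (φ y) (φ z) (φ w)
    (by rw [← map_form]; rw [hq, map_zero])
  refine ⟨φ.injective ?_, φ.injective ?_, φ.injective ?_, φ.injective ?_⟩ <;>
    simp [h1, h2, h3, h4]

lemma aniso_map {F G : Type*} [Field F] [Field G] (φ : F →+* G) {a b : F}
    (hs : Function.Surjective φ) (h : Aniso F a b) : Aniso G (φ a) (φ b) := by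
  intro x y z w hq
  obtain ⟨x, rfl⟩ := hs x
  obtain ⟨y, rfl⟩ := hs y
  obtain ⟨z, rfl⟩ := hs z
  obtain ⟨w, rfl⟩ := hs w
  rw [← map_form] at hq
  obtain ⟨h1, h2, h3, h4⟩ := h x y z w (φ.injective (by simpa using hq))
  simp [h1, h2, h3, h4]

lemma exists_odd_irreducible_factor {F : Type*} [Field F] :
    ∀ (n : ℕ) (h : F[X]), h.natDegree ≤ n → Odd h.natDegree →
      ∃ p : F[X], p.Monic ∧ Irreducible p ∧ Odd p.natDegree ∧ p ∣ h := by
  intro n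
  induction n using Nat.strong_induction_on with
  | _ n IH =>
  intro h hle hodd
  have h0 : h ≠ 0 := by
    intro h0
    rw [h0, natDegree_zero] at hodd
    simp [Nat.odd_iff] at hodd
  have hu : ¬IsUnit h := by
    intro hu
    rw [natDegree_eq_zero_of_isUnit hu] at hodd
    simp [Nat.odd_iff] at hodd
  obtain ⟨r, hri, hrd⟩ := WfDvdMonoid.exists_irreducible_factor hu h0
  obtain ⟨h', rfl⟩ := hrd
  have hr0 : r ≠ 0 := hri.ne_zero
  have h'0 : h' ≠ 0 := by
    rintro rfl
    simp at h0
  have hrpos : 0 < r.natDegree := hri.natDegree_pos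
  rw [natDegree_mul hr0 h'0] at hodd hle
  rcases Nat.even_or_odd r.natDegree with he | ho
  · have ho' : Odd h'.natDegree := by
      rcases he with ⟨j, hj⟩
      rcases hodd with ⟨k, hk⟩
      exact ⟨k - j, by omega⟩
    obtain ⟨p, h1, h2, h3, h4⟩ := IH h'.natDegree (by omega) h' le_rfl ho'
    exact ⟨p, h1, h2, h3, h4.mul_left r⟩
  · classical
    refine ⟨normalize r, monic_normalize hr0, (associated_normalize r).irreducible hri, ?_, ?_⟩
    · rwa [natDegree_eq_of_degree_eq (degree_normalize (p := r))]
    · exact dvd_mul_of_dvd_left (normalize_associated r).dvd h'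

lemma natDegree_lt_of_coeff_eq_zero {F : Type*} [Field F] (P : F[X]) (m : ℕ) (hm : 1 ≤ m)
    (hle : P.natDegree ≤ m) (hc : P.coeff m = 0) : P.natDegree < m := by
  rcases eq_or_ne P 0 with rfl | hP
  · simpa using Nat.lt_of_lt_of_le Nat.zero_lt_one hm
  · refine lt_of_le_of_ne hle fun h => ?_
    exact (mt leadingCoeff_eq_zero.mp hP) (by rwa [leadingCoeff, h])

lemma keyT {F : Type*} [Field F] {a b : F} (han : Aniso F a b) :
    ∀ (d : ℕ) (f : F[X]), f.Monic → Irreducible f → Odd f.natDegree → f.natDegree ≤ d →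
      ∀ P1 P2 P3 P4 : F[X],
        f ∣ P1 ^ 2 - C a * P2 ^ 2 - C b * P3 ^ 2 + C a * C b * P4 ^ 2 →
        f ∣ P1 ∧ f ∣ P2 ∧ f ∣ P3 ∧ f ∣ P4 := by
  intro d
  induction d using Nat.strong_induction_on with
  | _ d IHd =>
  intro f hmon hirr hodd hdle
  have hd1 : 1 ≤ f.natDegree := hodd.pos
  have hf1 : f ≠ 1 := by
    intro h
    rw [h, natDegree_one] at hd1
    omega
  have inner : ∀ e : ℕ, ∀ P1 P2 P3 P4 : F[X],
      P1.natDegree ≤ e → P2.natDegree ≤ e → P3.natDegree ≤ e → P4.natDegree ≤ e →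
      P1.natDegree < f.natDegree → P2.natDegree < f.natDegree →
      P3.natDegree < f.natDegree → P4.natDegree < f.natDegree →
      f ∣ P1 ^ 2 - C a * P2 ^ 2 - C b * P3 ^ 2 + C a * C b * P4 ^ 2 →
      P1 = 0 ∧ P2 = 0 ∧ P3 = 0 ∧ P4 = 0 := by
    intro e
    induction e using Nat.strong_induction_on with
    | _ e IHe =>
    intro P1 P2 P3 P4 h1e h2e h3e h4e h1d h2d h3d h4d hdvd
    set m := max (max P1.natDegree P2.natDegree) (max P3.natDegree P4.natDegree) with hm
    have h1m : P1.natDegree ≤ m := by omega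
    have h2m : P2.natDegree ≤ m := by omega
    have h3m : P3.natDegree ≤ m := by omega
    have h4m : P4.natDegree ≤ m := by omega
    rcases Nat.eq_zero_or_pos m with hm0 | hm1
    · -- all constants
      obtain ⟨c1, rfl⟩ := natDegree_eq_zero.mp (by omega : P1.natDegree = 0)
      obtain ⟨c2, rfl⟩ := natDegree_eq_zero.mp (by omega : P2.natDegree = 0)
      obtain ⟨c3, rfl⟩ := natDegree_eq_zero.mp (by omega : P3.natDegree = 0)
      obtain ⟨c4, rfl⟩ := natDegree_eq_zero.mp (by omega : P4.natDegree = 0)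
      have hC : C c1 ^ 2 - C a * C c2 ^ 2 - C b * C c3 ^ 2 + C a * C b * C c4 ^ 2 =
          C (c1 ^ 2 - a * c2 ^ 2 - b * c3 ^ 2 + a * b * c4 ^ 2) := by
        simp only [map_add, map_sub, map_mul, map_pow]
      rw [hC] at hdvd
      have hval : c1 ^ 2 - a * c2 ^ 2 - b * c3 ^ 2 + a * b * c4 ^ 2 = 0 := by
        by_contra hne
        exact hirr.not_isUnit (isUnit_of_dvd_unit hdvd (isUnit_C.mpr (Ne.isUnit hne)))
      obtain ⟨e1, e2, e3, e4⟩ := han _ _ _ _ hval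
      simp [e1, e2, e3, e4]
    · -- m ≥ 1
      set c1 := P1.coeff m
      set c2 := P2.coeff m
      set c3 := P3.coeff m
      set c4 := P4.coeff m
      have hval : c1 ^ 2 - a * c2 ^ 2 - b * c3 ^ 2 + a * b * c4 ^ 2 ≠ 0 := by
        intro h0
        obtain ⟨e1, e2, e3, e4⟩ := han _ _ _ _ h0
        have l1 := natDegree_lt_of_coeff_eq_zero P1 m hm1 h1m e1
        have l2 := natDegree_lt_of_coeff_eq_zero P2 m hm1 h2m e2
        have l3 := natDegree_lt_of_coeff_eq_zero P3 m hm1 h3m e3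
        have l4 := natDegree_lt_of_coeff_eq_zero P4 m hm1 h4m e4
        omega
      set qq := P1 ^ 2 - C a * P2 ^ 2 - C b * P3 ^ 2 + C a * C b * P4 ^ 2 with hqq
      have hco : qq.coeff (2 * m) = c1 ^ 2 - a * c2 ^ 2 - b * c3 ^ 2 + a * b * c4 ^ 2 := by
        have e1 : (P1 ^ 2).coeff (2 * m) = c1 ^ 2 := coeff_pow_of_natDegree_le h1m
        have e2 : (P2 ^ 2).coeff (2 * m) = c2 ^ 2 := coeff_pow_of_natDegree_le h2m
        have e3 : (P3 ^ 2).coeff (2 * m) = c3 ^ 2 := coeff_pow_of_natDegree_le h3m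
        have e4 : (P4 ^ 2).coeff (2 * m) = c4 ^ 2 := coeff_pow_of_natDegree_le h4m
        rw [hqq]
        simp only [coeff_add, coeff_sub, mul_assoc, coeff_C_mul, e1, e2, e3, e4]
      have hqqne : qq ≠ 0 := by
        intro h0
        rw [h0, coeff_zero] at hco
        exact hval hco.symm
      have hqqle : qq.natDegree ≤ 2 * m := by
        have b1 : (P1 ^ 2).natDegree ≤ 2 * m := by
          rw [natDegree_pow]; omega
        have b2 : (C a * P2 ^ 2).natDegree ≤ 2 * m := by
          refine (natDegree_C_mul_le a _).trans ?_
          rw [natDegree_pow]; omega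
        have b3 : (C b * P3 ^ 2).natDegree ≤ 2 * m := by
          refine (natDegree_C_mul_le b _).trans ?_
          rw [natDegree_pow]; omega
        have b4 : (C a * C b * P4 ^ 2).natDegree ≤ 2 * m := by
          rw [mul_assoc]
          refine (natDegree_C_mul_le a _).trans ?_
          refine (natDegree_C_mul_le b _).trans ?_
          rw [natDegree_pow]; omega
        have s1 := natDegree_sub_le (P1 ^ 2) (C a * P2 ^ 2)
        have s2 := natDegree_sub_le (P1 ^ 2 - C a * P2 ^ 2) (C b * P3 ^ 2)
        have s3 := natDegree_add_le (P1 ^ 2 - C a * P2 ^ 2 - C b * P3 ^ 2)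
          (C a * C b * P4 ^ 2)
        rw [hqq]
        omega
      have hqqdeg : qq.natDegree = 2 * m :=
        le_antisymm hqqle (le_natDegree_of_ne_zero (by rw [hco]; exact hval))
      obtain ⟨h, hfh⟩ := hdvd
      have hh0 : h ≠ 0 := by
        rintro rfl
        rw [mul_zero] at hfh
        exact hqqne hfh
      have hdegsum : f.natDegree + h.natDegree = 2 * m := by
        rw [← hqqdeg, hfh, natDegree_mul hirr.ne_zero hh0]
      have hoddh : Odd h.natDegree := by
        rcases hodd with ⟨k, hk⟩
        exact ⟨m - k - 1, by omega⟩
      obtain ⟨p, hpm, hpi, hpo, hpdvd⟩ :=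
        exists_odd_irreducible_factor h.natDegree h le_rfl hoddh
      have hpdle : p.natDegree ≤ h.natDegree := natDegree_le_of_dvd hpdvd hh0
      have hmltd : m < f.natDegree := by omega
      have hpltd : p.natDegree < f.natDegree := by omega
      have hpq : p ∣ qq := by
        rw [hfh]
        exact Dvd.dvd.mul_left hpdvd f
      obtain ⟨d1, d2, d3, d4⟩ := IHd p.natDegree (by omega) p hpm hpi hpo le_rfl P1 P2 P3 P4 hpq
      obtain ⟨Q1, hQ1⟩ := d1
      obtain ⟨Q2, hQ2⟩ := d2
      obtain ⟨Q3, hQ3⟩ := d3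
      obtain ⟨Q4, hQ4⟩ := d4
      have hp1 : 0 < p.natDegree := hpi.natDegree_pos
      have hfac : qq = p ^ 2 * (Q1 ^ 2 - C a * Q2 ^ 2 - C b * Q3 ^ 2 + C a * C b * Q4 ^ 2) := by
        rw [hqq, hQ1, hQ2, hQ3, hQ4]
        ring
      have hfp : ¬f ∣ p := by
        intro hdv
        have := natDegree_le_of_dvd hdv hpi.ne_zero
        omega
      have hcop : IsCoprime f (p ^ 2) := (hirr.coprime_iff_not_dvd.mpr hfp).pow_right
      have hfdvd2 : f ∣ Q1 ^ 2 - C a * Q2 ^ 2 - C b * Q3 ^ 2 + C a * C b * Q4 ^ 2 := by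
        refine hcop.dvd_of_dvd_mul_left ?_
        rw [← hfac]
        exact ⟨h, hfh⟩
      have hQdeg : ∀ P Q : F[X], P = p * Q → P.natDegree ≤ m →
          Q.natDegree ≤ m - 1 ∧ Q.natDegree < f.natDegree := by
        intro P Q hPQ hPle
        rcases eq_or_ne Q 0 with rfl | hQ0
        · simp only [natDegree_zero]
          omega
        · have : P.natDegree = p.natDegree + Q.natDegree := by
            rw [hPQ, natDegree_mul hpi.ne_zero hQ0]
          omega
      obtain ⟨q1a, q1b⟩ := hQdeg P1 Q1 hQ1 h1m
      obtain ⟨q2a, q2b⟩ := hQdeg P2 Q2 hQ2 h2m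
      obtain ⟨q3a, q3b⟩ := hQdeg P3 Q3 hQ3 h3m
      obtain ⟨q4a, q4b⟩ := hQdeg P4 Q4 hQ4 h4m
      have hmle : m ≤ e := by omega
      obtain ⟨z1, z2, z3, z4⟩ := IHe (m - 1) (by omega) Q1 Q2 Q3 Q4
        q1a q2a q3a q4a q1b q2b q3b q4b hfdvd2
      rw [hQ1, hQ2, hQ3, hQ4, z1, z2, z3, z4]
      simp
  -- now reduce arbitrary polynomials mod f
  intro P1 P2 P3 P4 hdvd
  have hred : ∀ P : F[X], f ∣ P - P %ₘ f := by
    intro P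
    have h := modByMonic_add_div P f
    exact ⟨P /ₘ f, by linear_combination -h⟩
  have hdvd' : f ∣ (P1 %ₘ f) ^ 2 - C a * (P2 %ₘ f) ^ 2 - C b * (P3 %ₘ f) ^ 2 +
      C a * C b * (P4 %ₘ f) ^ 2 := by
    have key : (P1 ^ 2 - C a * P2 ^ 2 - C b * P3 ^ 2 + C a * C b * P4 ^ 2) -
        ((P1 %ₘ f) ^ 2 - C a * (P2 %ₘ f) ^ 2 - C b * (P3 %ₘ f) ^ 2 +
          C a * C b * (P4 %ₘ f) ^ 2) =
        (P1 - P1 %ₘ f) * (P1 + P1 %ₘ f) - C a * ((P2 - P2 %ₘ f) * (P2 + P2 %ₘ f)) -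
          C b * ((P3 - P3 %ₘ f) * (P3 + P3 %ₘ f)) +
          C a * C b * ((P4 - P4 %ₘ f) * (P4 + P4 %ₘ f)) := by
      ring
    have hd : f ∣ (P1 ^ 2 - C a * P2 ^ 2 - C b * P3 ^ 2 + C a * C b * P4 ^ 2) -
        ((P1 %ₘ f) ^ 2 - C a * (P2 %ₘ f) ^ 2 - C b * (P3 %ₘ f) ^ 2 +
          C a * C b * (P4 %ₘ f) ^ 2) := by
      rw [key]
      refine dvd_add (dvd_sub (dvd_sub ?_ ?_) ?_) ?_
      · exact (hred P1).mul_right _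
      · exact ((hred P2).mul_right _).mul_left _
      · exact ((hred P3).mul_right _).mul_left _
      · exact ((hred P4).mul_right _).mul_left _
    have := dvd_sub hdvd hd
    simpa using this
  have hlt : ∀ P : F[X], (P %ₘ f).natDegree < f.natDegree := fun P =>
    natDegree_modByMonic_lt P hmon hf1
  obtain ⟨z1, z2, z3, z4⟩ := inner
    (max (max (P1 %ₘ f).natDegree (P2 %ₘ f).natDegree)
      (max (P3 %ₘ f).natDegree (P4 %ₘ f).natDegree))
    (P1 %ₘ f) (P2 %ₘ f) (P3 %ₘ f) (P4 %ₘ f)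
    (by omega) (by omega) (by omega) (by omega)
    (hlt P1) (hlt P2) (hlt P3) (hlt P4) hdvd'
  refine ⟨?_, ?_, ?_, ?_⟩ <;> rw [← modByMonic_eq_zero_iff_dvd hmon] <;> first
    | exact z1 | exact z2 | exact z3 | exact z4

lemma aniso_adjoinRoot {F : Type*} [Field F] {a b : F} (han : Aniso F a b) (f : F[X])
    [hfact : Fact (Irreducible f)] (hmon : f.Monic) (hodd : Odd f.natDegree) :
    Aniso (AdjoinRoot f) (algebraMap F _ a) (algebraMap F _ b) := by
  intro x y z w hq
  obtain ⟨P1, rfl⟩ := AdjoinRoot.mk_surjective x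
  obtain ⟨P2, rfl⟩ := AdjoinRoot.mk_surjective y
  obtain ⟨P3, rfl⟩ := AdjoinRoot.mk_surjective z
  obtain ⟨P4, rfl⟩ := AdjoinRoot.mk_surjective w
  have hmk : AdjoinRoot.mk f (P1 ^ 2 - C a * P2 ^ 2 - C b * P3 ^ 2 + C a * C b * P4 ^ 2) = 0 := by
    rw [map_add, map_sub, map_sub, map_mul, map_mul, map_mul, map_pow, map_pow, map_pow, map_pow,
      AdjoinRoot.mk_C, AdjoinRoot.mk_C]
    rw [AdjoinRoot.algebraMap_eq] at hq
    exact hq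
  rw [AdjoinRoot.mk_eq_zero] at hmk
  obtain ⟨d1, d2, d3, d4⟩ := keyT han f.natDegree f hmon hfact.out hodd le_rfl P1 P2 P3 P4 hmk
  refine ⟨?_, ?_, ?_, ?_⟩ <;> rw [AdjoinRoot.mk_eq_zero] <;>
    first | exact d1 | exact d2 | exact d3 | exact d4

lemma aniso_algEquiv {F A B : Type*} [Field F] [Field A] [Field B] [Algebra F A] [Algebra F B]
    (e : A ≃ₐ[F] B) {a b : F} (h : Aniso A (algebraMap F A a) (algebraMap F A b)) :
    Aniso B (algebraMap F B a) (algebraMap F B b) := by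
  have h2 := aniso_map e.toAlgHom.toRingHom (e : A ≃ B).surjective h
  have e1 : e.toAlgHom.toRingHom (algebraMap F A a) = algebraMap F B a := e.commutes a
  have e2 : e.toAlgHom.toRingHom (algebraMap F A b) = algebraMap F B b := e.commutes b
  rwa [e1, e2] at h2

lemma aniso_adjoin {K L : Type*} [Field K] [Field L] [Algebra K L] [FiniteDimensional K L]
    {a b : K} (han : Aniso K a b) (α : L) (hodd : Odd (finrank K K⟮α⟯)) :
    Aniso K⟮α⟯ (algebraMap K _ a) (algebraMap K _ b) := by
  have hint : IsIntegral K α := IsIntegral.of_finite K α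
  have hfr : (minpoly K α).natDegree = finrank K K⟮α⟯ := (adjoin.finrank hint).symm
  haveI : Fact (Irreducible (minpoly K α)) := Fact.mk (minpoly.irreducible hint)
  have h1 := aniso_adjoinRoot han (minpoly K α) (minpoly.monic hint)
    (by rw [hfr]; exact hodd)
  exact aniso_algEquiv (IntermediateField.adjoinRootEquivAdjoin K hint) h1

lemma springerV : ∀ (n : ℕ) (K L : Type v) [Field K] [Field L] [Algebra K L]
    [FiniteDimensional K L] (a b : K), finrank K L ≤ n → Odd (finrank K L) →
    Aniso K a b → Aniso L (algebraMap K L a) (algebraMap K L b) := by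
  intro n
  induction n using Nat.strong_induction_on with
  | _ n IH =>
  intro K L _ _ _ _ a b hle hodd han
  by_cases hsurj : Function.Surjective (algebraMap K L)
  · exact aniso_map _ hsurj han
  · rw [Function.Surjective] at hsurj
    push_neg at hsurj
    obtain ⟨α, hα⟩ := hsurj
    have hbot : K⟮α⟯ ≠ ⊥ := by
      intro h
      have hmem : α ∈ K⟮α⟯ := IntermediateField.mem_adjoin_simple_self K α
      rw [h, IntermediateField.mem_bot] at hmem
      obtain ⟨x, hx⟩ := hmem
      exact hα x hx
    have hrank : finrank K K⟮α⟯ * finrank K⟮α⟯ L = finrank K L :=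
      Module.finrank_mul_finrank K K⟮α⟯ L
    have hKF2 : 2 ≤ finrank K K⟮α⟯ := by
      have h1 : finrank K K⟮α⟯ ≠ 1 := fun h =>
        hbot (IntermediateField.finrank_eq_one_iff.mp h)
      have h0 : 0 < finrank K K⟮α⟯ := Module.finrank_pos
      omega
    have hFL1 : 0 < finrank K⟮α⟯ L := Module.finrank_pos
    rw [← hrank] at hodd
    have hoddKF : Odd (finrank K K⟮α⟯) := (Nat.odd_mul.mp hodd).1
    have hoddFL : Odd (finrank K⟮α⟯ L) := (Nat.odd_mul.mp hodd).2
    have hlt : finrank K⟮α⟯ L < n := by nlinarith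
    have hanF := aniso_adjoin han α hoddKF
    have hres := IH (finrank K⟮α⟯ L) hlt K⟮α⟯ L (algebraMap K K⟮α⟯ a)
      (algebraMap K K⟮α⟯ b) le_rfl hoddFL hanF
    rwa [← IsScalarTower.algebraMap_apply, ← IsScalarTower.algebraMap_apply] at hres

lemma springer {K : Type u} {L : Type v} [Field K] [Field L] [Algebra K L]
    [FiniteDimensional K L] (a b : K) (hodd : Odd (finrank K L)) (han : Aniso K a b) :
    Aniso L (algebraMap K L a) (algebraMap K L b) := by
  by_cases hsurj : Function.Surjective (algebraMap K L)
  · exact aniso_map _ hsurj han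
  · rw [Function.Surjective] at hsurj
    push_neg at hsurj
    obtain ⟨α, hα⟩ := hsurj
    have hrank : finrank K K⟮α⟯ * finrank K⟮α⟯ L = finrank K L :=
      Module.finrank_mul_finrank K K⟮α⟯ L
    rw [← hrank] at hodd
    have hoddKF : Odd (finrank K K⟮α⟯) := (Nat.odd_mul.mp hodd).1
    have hoddFL : Odd (finrank K⟮α⟯ L) := (Nat.odd_mul.mp hodd).2
    have hanF := aniso_adjoin han α hoddKF
    have hres := springerV (finrank K⟮α⟯ L) K⟮α⟯ L (algebraMap K K⟮α⟯ a)
      (algebraMap K K⟮α⟯ b) le_rfl hoddFL hanF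
    rwa [← IsScalarTower.algebraMap_apply, ← IsScalarTower.algebraMap_apply] at hres

lemma division_iff_aniso {F : Type*} [Field F] (a b : F) :
    (∀ x : ℍ[F, a, b], x ≠ 0 → IsUnit x) ↔ Aniso F a b := by
  constructor
  · intro hdiv x y z w hq
    by_cases h0 : (⟨x, y, z, w⟩ : ℍ[F, a, b]) = 0
    · rw [show (0 : ℍ[F, a, b]) = ⟨0, 0, 0, 0⟩ from rfl, QuaternionAlgebra.mk.injEq] at h0
      exact ⟨h0.1, h0.2.1, h0.2.2.1, h0.2.2.2⟩
    · obtain ⟨u, hu⟩ := hdiv _ h0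
      have hmul : (⟨x, y, z, w⟩ : ℍ[F, a, b]) * ⟨x, -y, -z, -w⟩ = 0 := by
        ext <;> simp <;> ring_nf
        · linear_combination hq
      have hstar : (⟨x, -y, -z, -w⟩ : ℍ[F, a, b]) = 0 := by
        have h2 : (↑u⁻¹ : ℍ[F, a, b]) * ((⟨x, y, z, w⟩ : ℍ[F, a, b]) * ⟨x, -y, -z, -w⟩) = 0 := by
          rw [hmul, mul_zero]
        rwa [← hu, ← mul_assoc, Units.inv_mul, one_mul] at h2
      rw [show (0 : ℍ[F, a, b]) = ⟨0, 0, 0, 0⟩ from rfl, QuaternionAlgebra.mk.injEq] at hstar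
      exact ⟨hstar.1, neg_eq_zero.mp hstar.2.1, neg_eq_zero.mp hstar.2.2.1,
        neg_eq_zero.mp hstar.2.2.2⟩
  · intro han x hx
    have hn0 : x.re ^ 2 - a * x.imI ^ 2 - b * x.imJ ^ 2 + a * b * x.imK ^ 2 ≠ 0 := by
      intro h0
      obtain ⟨h1, h2, h3, h4⟩ := han _ _ _ _ h0
      exact hx (by ext <;> simp [h1, h2, h3, h4])
    set n := x.re ^ 2 - a * x.imI ^ 2 - b * x.imJ ^ 2 + a * b * x.imK ^ 2 with hn
    refine ⟨⟨x, ⟨x.re / n, -x.imI / n, -x.imJ / n, -x.imK / n⟩, ?_, ?_⟩, rfl⟩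
    · ext <;> simp <;> field_simp <;> ring
    · ext <;> simp <;> field_simp <;> ring

end SpringerAux

theorem quaternionAlgebra_division_iff_of_odd_degree
    (K L : Type*) [Field K] [Field L] [Algebra K L] [FiniteDimensional K L]
    (hodd : Odd (Module.finrank K L)) (hchar : ringChar K ≠ 2)
    (a b : K) (ha : a ≠ 0) (hb : b ≠ 0) :
    (∀ x : ℍ[L, algebraMap K L a, algebraMap K L b], x ≠ 0 → IsUnit x) ↔
      (∀ x : ℍ[K, a, b], x ≠ 0 → IsUnit x) := by
  rw [SpringerAux.division_iff_aniso, SpringerAux.division_iff_aniso]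
  constructor
  · exact fun hL => SpringerAux.aniso_comap (algebraMap K L) hL
  · exact fun hK => SpringerAux.springer a b hodd hK
end

section
/- Let K be a field with char K ≠ 2 and a, b ∈ K nonzero. Then the quaternion algebra ℍ[K, a, b] is either a division ring or isomorphic as a K-algebra to the matrix algebra M₂(K). -/
open Quaternion

/-- Auxiliary: a quaternionic basis inside `M₂(K)` whose four elements are
linearly independent yields a splitting. -/
lemma split_of_matrices (K : Type*) [Field K] (a b : K)
    (A B : Matrix (Fin 2) (Fin 2) K)
    (hA : A * A = a • (1 : Matrix (Fin 2) (Fin 2) K))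
    (hB : B * B = b • (1 : Matrix (Fin 2) (Fin 2) K))
    (hBA : B * A = -(A * B))
    (hind : ∀ c₀ c₁ c₂ c₃ : K,
      c₀ • (1 : Matrix (Fin 2) (Fin 2) K) + c₁ • A + c₂ • B + c₃ • (A * B) = 0 →
      c₀ = 0 ∧ c₁ = 0 ∧ c₂ = 0 ∧ c₃ = 0) :
    Nonempty (ℍ[K, a, b] ≃ₐ[K] Matrix (Fin 2) (Fin 2) K) := by
  let q : QuaternionAlgebra.Basis (Matrix (Fin 2) (Fin 2) K) a 0 b :=
    ⟨A, B, A * B, by rw [hA]; simp, hB, rfl, by rw [hBA]; simp⟩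
  let f := q.liftHom
  have hinj : Function.Injective f := by
    rw [injective_iff_map_eq_zero]
    intro x hx
    have hlift : f x = x.re • (1 : Matrix (Fin 2) (Fin 2) K) + x.imI • A + x.imJ • B
        + x.imK • (A * B) := by
      show q.lift x = _
      rw [QuaternionAlgebra.Basis.lift, Algebra.algebraMap_eq_smul_one]
    rw [hlift] at hx
    obtain ⟨h1, h2, h3, h4⟩ := hind _ _ _ _ hx
    exact QuaternionAlgebra.ext h1 h2 h3 h4
  have hdim : Module.finrank K ℍ[K, a, b] = Module.finrank K (Matrix (Fin 2) (Fin 2) K) := by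
    rw [QuaternionAlgebra.finrank_eq_four, Module.finrank_matrix]
    simp
  have hsurj : Function.Surjective f :=
    (LinearMap.injective_iff_surjective_of_finrank_eq_finrank
      (f := f.toLinearMap) hdim).mp hinj
  exact ⟨AlgEquiv.ofBijective f ⟨hinj, hsurj⟩⟩

/-- If `b = u² - a v²`, the quaternion algebra splits. -/
lemma split_of_norm (K : Type*) [Field K] (hchar : ringChar K ≠ 2)
    (a b : K) (ha : a ≠ 0) (hb : b ≠ 0) (u v : K) (huv : u ^ 2 - a * v ^ 2 = b) :
    Nonempty (ℍ[K, a, b] ≃ₐ[K] Matrix (Fin 2) (Fin 2) K) := by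
  have h2 : (2 : K) ≠ 0 := Ring.two_ne_zero hchar
  refine split_of_matrices K a b !![0, 1; a, 0] !![u, v; -(a*v), -u] ?_ ?_ ?_ ?_
  · ext i j
    fin_cases i <;> fin_cases j <;>
      simp [Matrix.mul_apply, Fin.sum_univ_two, Matrix.one_apply]
  · ext i j
    fin_cases i <;> fin_cases j <;>
      simp [Matrix.mul_apply, Fin.sum_univ_two, Matrix.one_apply] <;>
      first
      | ring1
      | linear_combination huv
      | linear_combination -huv
      | linear_combination 2 * huv
      | linear_combination (-2 : K) * huv
  · ext i j
    fin_cases i <;> fin_cases j <;>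
      simp [Matrix.mul_apply, Fin.sum_univ_two] <;> ring
  · intro c₀ c₁ c₂ c₃ h
    have e1 := congrFun (congrFun h 0) 0
    have e2 := congrFun (congrFun h 0) 1
    have e3 := congrFun (congrFun h 1) 0
    have e4 := congrFun (congrFun h 1) 1
    simp [Matrix.mul_apply, Fin.sum_univ_two, Matrix.one_apply] at e1 e2 e3 e4
    have hc0 : c₀ = 0 := by
      have : 2 * c₀ = 0 := by linear_combination e1 + e4
      exact (mul_eq_zero.mp this).resolve_left h2
    have hc1 : c₁ = 0 := by
      have : 2 * (a * c₁) = 0 := by linear_combination a * e2 + e3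
      rcases mul_eq_zero.mp this with h | h
      · exact absurd h h2
      · exact (mul_eq_zero.mp h).resolve_left ha
    have hcu : c₂ * u - c₃ * (a * v) = 0 := by
      have : 2 * (c₂ * u - c₃ * (a * v)) = 0 := by linear_combination e1 - e4
      exact (mul_eq_zero.mp this).resolve_left h2
    have hcv : c₂ * v - c₃ * u = 0 := by
      have : 2 * (a * (c₂ * v - c₃ * u)) = 0 := by linear_combination a * e2 - e3
      rcases mul_eq_zero.mp this with h | h
      · exact absurd h h2
      · exact (mul_eq_zero.mp h).resolve_left ha
    have hc2 : c₂ = 0 := by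
      have : c₂ * b = 0 := by linear_combination u * hcu - (a * v) * hcv - c₂ * huv
      exact (mul_eq_zero.mp this).resolve_right hb
    have hc3 : c₃ = 0 := by
      have : c₃ * b = 0 := by
        linear_combination v * hcu - u * hcv - c₃ * huv
      exact (mul_eq_zero.mp this).resolve_right hb
    exact ⟨hc0, hc1, hc2, hc3⟩

theorem quaternionAlgebra_division_or_split
    (K : Type*) [Field K] (hchar : ringChar K ≠ 2)
    (a b : K) (ha : a ≠ 0) (hb : b ≠ 0) :
    (∀ x : ℍ[K, a, b], x ≠ 0 → IsUnit x) ∨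
      Nonempty (ℍ[K, a, b] ≃ₐ[K] Matrix (Fin 2) (Fin 2) K) := by
  have h2 : (2 : K) ≠ 0 := Ring.two_ne_zero hchar
  by_cases hd : ∀ x : ℍ[K, a, b], x ≠ 0 → IsUnit x
  · exact Or.inl hd
  right
  push_neg at hd
  obtain ⟨x, hx0, hxu⟩ := hd
  -- the norm of x must vanish
  set n : K := x.re ^ 2 - a * x.imI ^ 2 - b * x.imJ ^ 2 + a * b * x.imK ^ 2 with hn
  have hnorm : n = 0 := by
    by_contra hne
    apply hxu
    have hxs : x * star x = n • 1 := by
      refine QuaternionAlgebra.ext ?_ ?_ ?_ ?_ <;>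
        simp [QuaternionAlgebra.re_mul, QuaternionAlgebra.imI_mul,
          QuaternionAlgebra.imJ_mul, QuaternionAlgebra.imK_mul, hn, smul_eq_mul] <;> ring
    have hsx : star x * x = n • 1 := by
      refine QuaternionAlgebra.ext ?_ ?_ ?_ ?_ <;>
        simp [QuaternionAlgebra.re_mul, QuaternionAlgebra.imI_mul,
          QuaternionAlgebra.imJ_mul, QuaternionAlgebra.imK_mul, hn, smul_eq_mul] <;> ring
    refine ⟨⟨x, n⁻¹ • star x, ?_, ?_⟩, rfl⟩
    · rw [mul_smul_comm, hxs, smul_smul, inv_mul_cancel₀ hne, one_smul]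
    · rw [smul_mul_assoc, hsx, smul_smul, inv_mul_cancel₀ hne, one_smul]
  -- from the isotropic norm, produce u v with u² - a v² = b
  obtain ⟨u, v, huv⟩ : ∃ u v : K, u ^ 2 - a * v ^ 2 = b := by
    by_cases hsq : ∃ r : K, r ^ 2 = a
    · obtain ⟨r, hr⟩ := hsq
      have hr0 : r ≠ 0 := by rintro rfl; exact ha (by simpa using hr.symm)
      subst hr
      refine ⟨(b + 1) / 2, (b - 1) / (2 * r), ?_⟩
      field_simp
      ring
    · push_neg at hsq
      have key : ∀ p q : K, p ^ 2 = a * q ^ 2 → p = 0 ∧ q = 0 := by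
        intro p q hpq
        rcases eq_or_ne q 0 with rfl | hq
        · simpa [pow_eq_zero_iff] using hpq
        · exact absurd (show (p / q) ^ 2 = a by field_simp; linear_combination hpq)
            (hsq (p / q))
      set d : K := x.imJ ^ 2 - a * x.imK ^ 2 with hdd
      have hd0 : d ≠ 0 := by
        intro hd
        obtain ⟨h3, h4⟩ := key x.imJ x.imK (by linear_combination hd)
        obtain ⟨h1, h2⟩ := key x.re x.imI (by
          have := hnorm
          rw [hn, h3, h4] at this
          linear_combination this)
        exact hx0 (QuaternionAlgebra.ext (by simpa using h1) (by simpa using h2)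
          (by simpa using h3) (by simpa using h4))
      refine ⟨(x.re * x.imJ - a * x.imI * x.imK) / d,
        (x.imI * x.imJ - x.re * x.imK) / d, ?_⟩
      have hbd : x.re ^ 2 - a * x.imI ^ 2 = b * d := by
        rw [hdd]; linear_combination hnorm
      field_simp
      linear_combination (x.imJ ^ 2 - a * x.imK ^ 2) * hbd
  exact split_of_norm K hchar a b ha hb u v huv
end

section
/- Let p₁, p₂ be distinct odd primes with (p₂/p₁) = -1 (Legendre symbol) and p₁ ≡ 1 (mod 5). Then the quaternion algebra ℍ[ℚ(ξ₅), p₁, p₂] over the 5th cyclotomic field is a division ring. -/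
open Polynomial

namespace MyAux

variable {p : ℕ} [hp : Fact p.Prime]

lemma toZMod_eq_zero_iff (x : ℤ_[p]) : PadicInt.toZMod x = 0 ↔ ‖x‖ < 1 := by
  rw [← RingHom.mem_ker, PadicInt.ker_toZMod, PadicInt.maximalIdeal_eq_span_p,
    Ideal.mem_span_singleton, ← PadicInt.norm_lt_one_iff_dvd]

lemma norm_eq_one_iff (x : ℤ_[p]) : ‖x‖ = 1 ↔ PadicInt.toZMod x ≠ 0 := by
  rw [Ne, toZMod_eq_zero_iff, not_lt]
  constructor
  · intro h; rw [h]
  · intro h; exact le_antisymm (PadicInt.norm_le_one x) h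

lemma unit_binary (q : ℕ) (hq : ¬ IsSquare ((q : ZMod p))) (x y : ℤ_[p])
    (hx : ‖x‖ = 1) (hy : ‖y‖ = 1) : ‖x ^ 2 - (q : ℤ_[p]) * y ^ 2‖ = 1 := by
  rw [norm_eq_one_iff] at hx hy ⊢
  intro h0
  rw [map_sub, map_pow, map_mul, map_pow, map_natCast, sub_eq_zero] at h0
  exact hq ⟨PadicInt.toZMod x / PadicInt.toZMod y, by
    field_simp
    linear_combination -h0⟩


lemma q_norm_one (q : ℕ) (hq0 : (q : ZMod p) ≠ 0) : ‖(q : ℚ_[p])‖ = 1 := by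
  have : ((q : ℤ_[p]) : ℚ_[p]) = (q : ℚ_[p]) := by push_cast; ring
  rw [← this, PadicInt.padic_norm_e_of_padicInt, norm_eq_one_iff, map_natCast]
  exact hq0

lemma sq_max (a b : ℝ) (ha : 0 ≤ a) (hb : 0 ≤ b) :
    max a b ^ 2 = max (a ^ 2) (b ^ 2) := by
  rcases le_total a b with h | h
  · rw [max_eq_right h, max_eq_right (by nlinarith)]
  · rw [max_eq_left h, max_eq_left (by nlinarith)]

lemma binary_norm (q : ℕ) (hq : ¬ IsSquare ((q : ZMod p))) (x y : ℚ_[p]) :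
    ‖x ^ 2 - (q : ℚ_[p]) * y ^ 2‖ = max ‖x‖ ‖y‖ ^ 2 := by
  have hq0 : (q : ZMod p) ≠ 0 := fun h => hq (h ▸ ⟨0, by ring⟩)
  have hqn : ‖(q : ℚ_[p])‖ = 1 := q_norm_one q hq0
  by_cases hx0 : x = 0
  · subst hx0
    simp [norm_mul, hqn, sq_max _ _ (norm_nonneg _) (norm_nonneg _)]
  by_cases hy0 : y = 0
  · subst hy0
    simp
  rcases eq_or_ne ‖x‖ ‖y‖ with heq | hne
  · -- equal norms: scale to units
    have hxZ : x ≠ 0 := hx0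
    set v : ℤ := x.valuation with hv
    have hnx : ‖x‖ = (p : ℝ) ^ (-v) := Padic.norm_eq_zpow_neg_valuation hx0
    have hp1 : (1 : ℝ) < p := by exact_mod_cast hp.out.one_lt
    have hppos : (0:ℝ) < p := by linarith
    have hpz : ((p : ℚ_[p]) : ℚ_[p]) ≠ 0 := by
      exact_mod_cast (Nat.cast_ne_zero (R := ℚ_[p])).2 hp.out.ne_zero
    set u : ℚ_[p] := x * (p : ℚ_[p]) ^ (-v) with hu
    set w : ℚ_[p] := y * (p : ℚ_[p]) ^ (-v) with hw
    have hnormp : ‖(p : ℚ_[p]) ^ (-v)‖ = (p : ℝ) ^ (v : ℤ) := by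
      rw [norm_zpow, Padic.norm_p]
      rw [← zpow_neg_one, ← zpow_mul]
      ring_nf
    have hun : ‖u‖ = 1 := by
      rw [hu, norm_mul, hnx, hnormp, ← zpow_add₀ (ne_of_gt hppos)]
      simp
    have hwn : ‖w‖ = 1 := by
      rw [hw, norm_mul, ← heq, hnx, hnormp, ← zpow_add₀ (ne_of_gt hppos)]
      simp
    have hxu : x = u * (p : ℚ_[p]) ^ v := by
      rw [hu, mul_assoc, ← zpow_add₀ hpz]
      simp
    have hyw : y = w * (p : ℚ_[p]) ^ v := by
      rw [hw, mul_assoc, ← zpow_add₀ hpz]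
      simp
    have key : x ^ 2 - (q : ℚ_[p]) * y ^ 2 = (u ^ 2 - (q : ℚ_[p]) * w ^ 2) * ((p:ℚ_[p]) ^ v) ^ 2 := by
      rw [hxu, hyw]; ring
    have huI : ‖u‖ ≤ 1 := le_of_eq hun
    have hwI : ‖w‖ ≤ 1 := le_of_eq hwn
    have hmain : ‖u ^ 2 - (q : ℚ_[p]) * w ^ 2‖ = 1 := by
      have := unit_binary q hq ⟨u, huI⟩ ⟨w, hwI⟩ hun hwn
      rw [← PadicInt.padic_norm_e_of_padicInt] at this
      push_cast at this
      exact this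
    have hpv : ‖(p:ℚ_[p]) ^ v‖ = ‖x‖ := by
      rw [norm_zpow, Padic.norm_p, hnx, ← zpow_neg_one, ← zpow_mul]
      ring_nf
    rw [key, norm_mul, hmain, one_mul, norm_pow, hpv, ← heq, max_self]
  · -- distinct norms
    have h1 : ‖x ^ 2‖ ≠ ‖-((q : ℚ_[p]) * y ^ 2)‖ := by
      rw [norm_neg, norm_pow, norm_mul, hqn, one_mul, norm_pow]
      intro h
      exact hne (by
        have hx' : 0 ≤ ‖x‖ := norm_nonneg _
        have hy' : 0 ≤ ‖y‖ := norm_nonneg _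
        nlinarith [sq_nonneg (‖x‖ - ‖y‖), sq_nonneg (‖x‖ + ‖y‖)])
    rw [sub_eq_add_neg, Padic.add_eq_max_of_ne h1, norm_neg, norm_pow, norm_mul, hqn,
      one_mul, norm_pow, sq_max _ _ (norm_nonneg _) (norm_nonneg _)]

lemma max_norm_pow (x y : ℚ_[p]) (hA : max ‖x‖ ‖y‖ ≠ 0) :
    ∃ s : ℤ, max ‖x‖ ‖y‖ = (p : ℝ) ^ s := by
  rcases max_choice ‖x‖ ‖y‖ with h | h <;> rw [h] at hA ⊢
  · exact ⟨-x.valuation, Padic.norm_eq_zpow_neg_valuation (by simpa using hA)⟩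
  · exact ⟨-y.valuation, Padic.norm_eq_zpow_neg_valuation (by simpa using hA)⟩

lemma quad_aniso (q : ℕ) (hq : ¬ IsSquare ((q : ZMod p))) (a b c d : ℚ_[p])
    (h : a ^ 2 - (p : ℚ_[p]) * b ^ 2 - (q : ℚ_[p]) * c ^ 2 + (p : ℚ_[p]) * (q : ℚ_[p]) * d ^ 2 = 0) :
    a = 0 ∧ b = 0 ∧ c = 0 ∧ d = 0 := by
  have hp1 : (1 : ℝ) < p := by exact_mod_cast hp.out.one_lt
  have key : a ^ 2 - (q : ℚ_[p]) * c ^ 2 = (p : ℚ_[p]) * (b ^ 2 - (q : ℚ_[p]) * d ^ 2) := by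
    linear_combination h
  have hn := congrArg norm key
  rw [binary_norm q hq, norm_mul, Padic.norm_p, binary_norm q hq] at hn
  have hzero : max ‖a‖ ‖c‖ = 0 ∧ max ‖b‖ ‖d‖ = 0 := by
    by_contra hcon
    have hboth : max ‖a‖ ‖c‖ ≠ 0 ∧ max ‖b‖ ‖d‖ ≠ 0 := by
      have h1 : 0 ≤ max ‖a‖ ‖c‖ := le_max_of_le_left (norm_nonneg _)
      have h2 : 0 ≤ max ‖b‖ ‖d‖ := le_max_of_le_left (norm_nonneg _)
      constructor
      · intro hA
        rw [hA] at hn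
        have h0 : (p:ℝ)⁻¹ * (max ‖b‖ ‖d‖) ^ 2 = 0 := by rw [← hn]; norm_num
        rcases mul_eq_zero.mp h0 with h' | h'
        · have hppos : (0:ℝ) < (p:ℝ)⁻¹ := by positivity
          exact absurd h' (ne_of_gt hppos)
        · exact hcon ⟨hA, pow_eq_zero_iff (two_ne_zero) |>.mp h'⟩
      · intro hB
        rw [hB] at hn
        have h0 : (max ‖a‖ ‖c‖) ^ 2 = 0 := by rw [hn]; norm_num
        exact hcon ⟨pow_eq_zero_iff (two_ne_zero) |>.mp h0, hB⟩
    obtain ⟨s, hs⟩ := max_norm_pow a c hboth.1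
    obtain ⟨t, ht⟩ := max_norm_pow b d hboth.2
    rw [hs, ht] at hn
    have hppos : (0:ℝ) < p := by linarith
    have : (p:ℝ) ^ (2 * s) = (p:ℝ) ^ (-1 + 2 * t) := by
      rw [zpow_add₀ (ne_of_gt hppos), zpow_neg_one]
      rw [show (2:ℤ) * s = s * 2 by ring, show (2:ℤ) * t = t * 2 by ring,
        zpow_mul, zpow_mul]
      push_cast at hn ⊢
      rw [zpow_two, zpow_two] at *
      nlinarith [hn]
    have := zpow_right_injective₀ hppos (ne_of_gt hp1) this
    omega
  have ha : ‖a‖ ≤ 0 := hzero.1 ▸ le_max_left _ _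
  have hc : ‖c‖ ≤ 0 := hzero.1 ▸ le_max_right _ _
  have hb : ‖b‖ ≤ 0 := hzero.2 ▸ le_max_left _ _
  have hd : ‖d‖ ≤ 0 := hzero.2 ▸ le_max_right _ _
  exact ⟨norm_le_zero_iff.mp ha, norm_le_zero_iff.mp hb, norm_le_zero_iff.mp hc,
    norm_le_zero_iff.mp hd⟩


lemma exists_fifth_root (hmod : p % 5 = 1) :
    ∃ z : ℚ_[p], z ^ 5 = 1 ∧ z ≠ 1 := by
  have hp5 : (5 : ℕ) ∣ p - 1 := by omega
  have hpne : p - 1 ≠ 0 := by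
    have := hp.out.two_le; omega
  -- a primitive 5th root of unity mod p
  obtain ⟨g, hg⟩ := IsCyclic.exists_generator (α := (ZMod p)ˣ)
  have hcard : Fintype.card (ZMod p)ˣ = p - 1 := by
    rw [ZMod.card_units_eq_totient, Nat.totient_prime hp.out]
  have horder : orderOf g = p - 1 := by
    rw [orderOf_eq_card_of_forall_mem_zpowers hg, Nat.card_eq_fintype_card, hcard]
  set u : (ZMod p)ˣ := g ^ ((p - 1) / 5) with hu
  have hk : (p - 1) / 5 ≠ 0 := by
    intro h
    rcases hp5 with ⟨c, hc⟩
    omega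
  have hdvd : (p - 1) / 5 ∣ orderOf g := by
    rw [horder]; exact Nat.div_dvd_of_dvd hp5
  have hord : orderOf u = 5 := by
    rw [hu, orderOf_pow_of_dvd hk hdvd, horder, Nat.div_div_self hp5 hpne]
  have hu5 : u ^ 5 = 1 := hord ▸ pow_orderOf_eq_one u
  have hu1 : u ≠ 1 := by
    intro h
    rw [h, orderOf_one] at hord
    omega
  -- lift to ℤ_[p]
  set a : ℤ_[p] := ((u : ZMod p).val : ℤ_[p]) with ha
  have hta : PadicInt.toZMod a = (u : ZMod p) := by
    rw [ha, map_natCast, ZMod.natCast_zmod_val]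
  have hta0 : PadicInt.toZMod a ≠ 0 := by
    rw [hta]; exact u.ne_zero
  have hana : ‖a‖ = 1 := (norm_eq_one_iff a).mpr hta0
  -- Hensel
  set F : Polynomial ℤ_[p] := Polynomial.X ^ 5 - 1 with hF
  have hFa : F.eval a = a ^ 5 - 1 := by simp [hF]
  have hFda : F.derivative.eval a = 5 * a ^ 4 := by
    rw [hF]
    simp
    norm_num
  have h5 : ‖(5 : ℤ_[p])‖ = 1 := by
    rw [norm_eq_one_iff]
    have : ((5 : ℕ) : ℤ_[p]) = (5 : ℤ_[p]) := by norm_num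
    rw [← this, map_natCast]
    rw [Ne, ZMod.natCast_eq_zero_iff]
    intro hdv
    have := (Nat.prime_dvd_prime_iff_eq hp.out (by norm_num)).mp hdv
    omega
  have hnormd : ‖F.derivative.eval a‖ = 1 := by
    rw [hFda, norm_mul, norm_pow, h5, hana]
    norm_num
  have hnorme : ‖F.eval a‖ < 1 := by
    rw [hFa, ← toZMod_eq_zero_iff]
    rw [map_sub, map_pow, map_one, hta]
    have : ((u : ZMod p)) ^ 5 = ((u ^ 5 : (ZMod p)ˣ) : ZMod p) := by push_cast; ring
    rw [this, hu5, Units.val_one, sub_self]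
  obtain ⟨z, hz0, hzdist, -, -⟩ := hensels_lemma (F := F) (a := a)
    (by rw [Polynomial.coe_aeval_eq_eval, hnormd]; simpa using hnorme)
  have hz5 : z ^ 5 = 1 := by
    have h' : z ^ 5 - 1 = 0 := by
      have : F.eval z = z ^ 5 - 1 := by simp [hF]
      rw [← this, ← Polynomial.coe_aeval_eq_eval, hz0]
    exact sub_eq_zero.mp h'
  have hzne : z ≠ 1 := by
    intro h
    have h1 : PadicInt.toZMod (z - a) = 0 := by
      rw [toZMod_eq_zero_iff]
      rw [Polynomial.coe_aeval_eq_eval, hnormd] at hzdist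
      exact hzdist
    rw [map_sub, hta, h, map_one, sub_eq_zero] at h1
    exact hu1 (Units.ext h1.symm)
  refine ⟨(z : ℚ_[p]), ?_, ?_⟩
  · have := congrArg (fun t : ℤ_[p] => (t : ℚ_[p])) hz5
    push_cast at this
    exact this
  · intro h
    exact hzne (Subtype.ext (by simpa using h))

end MyAux

open Complex IntermediateField Quaternion

theorem division_quaternion_over_fifth_cyclotomic (p₁ p₂ : ℕ)
    (hp₁ : p₁.Prime) (hp₂ : p₂.Prime) (hodd₁ : Odd p₁) (hodd₂ : Odd p₂)
    (hne : p₁ ≠ p₂) (hmod : p₁ % 5 = 1)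
    (hleg : @legendreSym p₁ ⟨hp₁⟩ p₂ = -1) :
    let K : IntermediateField ℚ ℂ :=
      IntermediateField.adjoin ℚ {Complex.exp (2 * Real.pi * Complex.I / 5)}
    ∀ x : ℍ[↥K, (p₁ : ↥K), (p₂ : ↥K)], x ≠ 0 → IsUnit x := by
  intro K x hx
  haveI : Fact p₁.Prime := ⟨hp₁⟩
  have hζ : IsPrimitiveRoot (Complex.exp (2 * Real.pi * Complex.I / 5)) 5 := by
    have := Complex.isPrimitiveRoot_exp 5 (by norm_num)
    simpa using this
  have hint : IsIntegral ℚ (Complex.exp (2 * Real.pi * Complex.I / 5)) :=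
    (hζ.isIntegral (by norm_num)).tower_top
  have hq : ¬ IsSquare ((p₂ : ZMod p₁)) := ((legendreSym.eq_neg_one_iff' (p := p₁)).mp hleg)
  obtain ⟨w, hw5, hw1⟩ := MyAux.exists_fifth_root (p := p₁) hmod
  -- w is a root of the minimal polynomial of ζ
  have hroot : w ∈ (minpoly ℚ (Complex.exp (2 * Real.pi * Complex.I / 5))).aroots ℚ_[p₁] := by
    rw [Polynomial.mem_aroots]
    refine ⟨minpoly.ne_zero hint, ?_⟩
    rw [← Polynomial.cyclotomic_eq_minpoly_rat hζ (by norm_num)]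
    haveI : Fact (Nat.Prime 5) := ⟨by norm_num⟩
    rw [Polynomial.aeval_def, ← Polynomial.eval_map, Polynomial.map_cyclotomic,
      Polynomial.cyclotomic_prime]
    have hg : (∑ i ∈ Finset.range 5, w ^ i) * (w - 1) = w ^ 5 - 1 := geom_sum_mul w 5
    rw [hw5, sub_self] at hg
    have hw1' : w - 1 ≠ 0 := sub_ne_zero.mpr hw1
    have hsum : (∑ i ∈ Finset.range 5, w ^ i) = 0 := by
      rcases mul_eq_zero.mp hg with h | h
      · exact h
      · exact absurd h hw1'
    simp only [Polynomial.eval_finset_sum, Polynomial.eval_pow, Polynomial.eval_X]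
    exact hsum
  let φ : ↥K →ₐ[ℚ] ℚ_[p₁] :=
    (IntermediateField.algHomAdjoinIntegralEquiv ℚ hint).symm ⟨w, hroot⟩
  -- the reduced norm
  set n : ↥K := x.re ^ 2 - p₁ * x.imI ^ 2 - p₂ * x.imJ ^ 2 + p₁ * p₂ * x.imK ^ 2 with hn
  have hxs : x * star x = (n : ℍ[↥K, (p₁ : ↥K), (p₂ : ↥K)]) := by
    ext <;>
      simp only [QuaternionAlgebra.re_mul, QuaternionAlgebra.imI_mul, QuaternionAlgebra.imJ_mul,
        QuaternionAlgebra.imK_mul, QuaternionAlgebra.re_star, QuaternionAlgebra.imI_star,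
        QuaternionAlgebra.imJ_star, QuaternionAlgebra.imK_star, QuaternionAlgebra.re_coe,
        QuaternionAlgebra.imI_coe, QuaternionAlgebra.imJ_coe, QuaternionAlgebra.imK_coe, hn] <;>
      ring
  have hsx : star x * x = (n : ℍ[↥K, (p₁ : ↥K), (p₂ : ↥K)]) := by
    ext <;>
      simp only [QuaternionAlgebra.re_mul, QuaternionAlgebra.imI_mul, QuaternionAlgebra.imJ_mul,
        QuaternionAlgebra.imK_mul, QuaternionAlgebra.re_star, QuaternionAlgebra.imI_star,
        QuaternionAlgebra.imJ_star, QuaternionAlgebra.imK_star, QuaternionAlgebra.re_coe,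
        QuaternionAlgebra.imI_coe, QuaternionAlgebra.imJ_coe, QuaternionAlgebra.imK_coe, hn] <;>
      ring
  have hn0 : n ≠ 0 := by
    intro h0
    -- transport to ℚ_[p₁]
    have heq : (φ x.re) ^ 2 - (p₁ : ℚ_[p₁]) * (φ x.imI) ^ 2 - (p₂ : ℚ_[p₁]) * (φ x.imJ) ^ 2
        + (p₁ : ℚ_[p₁]) * (p₂ : ℚ_[p₁]) * (φ x.imK) ^ 2 = 0 := by
      have := congrArg φ (hn ▸ h0 : (x.re ^ 2 - p₁ * x.imI ^ 2 - p₂ * x.imJ ^ 2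
        + p₁ * p₂ * x.imK ^ 2 : ↥K) = 0)
      simpa [map_sub, map_add, map_mul, map_pow, map_natCast] using this
    obtain ⟨h1, h2, h3, h4⟩ := MyAux.quad_aniso p₂ hq _ _ _ _ heq
    have hinj : Function.Injective φ := φ.toRingHom.injective
    apply hx
    have e1 : x.re = 0 := hinj (by rw [h1, map_zero])
    have e2 : x.imI = 0 := hinj (by rw [h2, map_zero])
    have e3 : x.imJ = 0 := hinj (by rw [h3, map_zero])
    have e4 : x.imK = 0 := hinj (by rw [h4, map_zero])
    ext <;> simp [e1, e2, e3, e4]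
  refine ⟨⟨x, ((n⁻¹ : ↥K) : ℍ[↥K, (p₁ : ↥K), (p₂ : ↥K)]) * star x, ?_, ?_⟩, rfl⟩
  · rw [← mul_assoc, ← QuaternionAlgebra.coe_commutes, mul_assoc, hxs,
      ← QuaternionAlgebra.coe_mul, inv_mul_cancel₀ hn0, QuaternionAlgebra.coe_one]
  · rw [mul_assoc, hsx, ← QuaternionAlgebra.coe_mul, inv_mul_cancel₀ hn0,
      QuaternionAlgebra.coe_one]
end

section
/- Let p₁ ≡ p₂ ≡ 3 (mod 4) be distinct odd primes. Then the quaternion algebra ℍ[ℚ(ξ₇), p₁, p₂] over the 7th cyclotomic field is a division ring. -/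
open Complex IntermediateField Quaternion
open Polynomial


lemma mod8_key : ∀ p q a b c : ZMod 8, (p = 3 ∨ p = 7) → (q = 3 ∨ q = 7) →
    a^2 = p*b^2 + q*c^2 →
    (ZMod.castHom (by norm_num : (2:ℕ) ∣ 8) (ZMod 2) a = 0 ∧
     ZMod.castHom (by norm_num : (2:ℕ) ∣ 8) (ZMod 2) b = 0 ∧
     ZMod.castHom (by norm_num : (2:ℕ) ∣ 8) (ZMod 2) c = 0) := by decide

lemma int_step (p q : ℕ) (hp : p % 8 = 3 ∨ p % 8 = 7) (hq : q % 8 = 3 ∨ q % 8 = 7)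
    (X₁ Y₁ X₂ Y₂ X₃ Y₃ : ℤ)
    (E₁ : X₁^2 - 2*Y₁^2 - p*(X₂^2-2*Y₂^2) - q*(X₃^2-2*Y₃^2) = 0)
    (E₂ : 2*X₁*Y₁ - Y₁^2 - p*(2*X₂*Y₂-Y₂^2) - q*(2*X₃*Y₃-Y₃^2) = 0) :
    2 ∣ X₁ ∧ 2 ∣ Y₁ ∧ 2 ∣ X₂ ∧ 2 ∣ Y₂ ∧ 2 ∣ X₃ ∧ 2 ∣ Y₃ := by
  have hp8 : (p : ZMod 8) = 3 ∨ (p : ZMod 8) = 7 := by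
    rcases hp with h | h <;> [left; right] <;>
      rw [← ZMod.natCast_mod, h] <;> norm_num
  have hq8 : (q : ZMod 8) = 3 ∨ (q : ZMod 8) = 7 := by
    rcases hq with h | h <;> [left; right] <;>
      rw [← ZMod.natCast_mod, h] <;> norm_num
  have key : ∀ r : ZMod 8, r^2 + r + 2 = 0 →
      ((X₁ : ZMod 8) + r*(Y₁ : ZMod 8))^2 =
        (p : ZMod 8)*((X₂ : ZMod 8) + r*(Y₂ : ZMod 8))^2 +
        (q : ZMod 8)*((X₃ : ZMod 8) + r*(Y₃ : ZMod 8))^2 := by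
    intro r hr
    have e1 : ((X₁^2 - 2*Y₁^2 - p*(X₂^2-2*Y₂^2) - q*(X₃^2-2*Y₃^2) : ℤ) : ZMod 8) = 0 := by
      rw [E₁]; norm_num
    have e2 : ((2*X₁*Y₁ - Y₁^2 - p*(2*X₂*Y₂-Y₂^2) - q*(2*X₃*Y₃-Y₃^2) : ℤ) : ZMod 8) = 0 := by
      rw [E₂]; norm_num
    push_cast at e1 e2
    linear_combination e1 + r*e2 +
      ((Y₁:ZMod 8)^2 - (p:ZMod 8)*(Y₂:ZMod 8)^2 - (q:ZMod 8)*(Y₃:ZMod 8)^2)*hr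
  have h2 := mod8_key _ _ _ _ _ hp8 hq8 (key 2 (by decide))
  have h5 := mod8_key _ _ _ _ _ hp8 hq8 (key 5 (by decide))
  have conv2 : ∀ X Y : ℤ, ZMod.castHom (by norm_num : (2:ℕ) ∣ 8) (ZMod 2)
      ((X : ZMod 8) + 2*(Y : ZMod 8)) = 0 → 2 ∣ X + 2*Y := by
    intro X Y h
    have : ((X : ZMod 8) + 2*(Y : ZMod 8)) = ((X + 2*Y : ℤ) : ZMod 8) := by push_cast; ring
    rw [this, map_intCast] at h
    exact_mod_cast (ZMod.intCast_zmod_eq_zero_iff_dvd _ 2).mp (by exact_mod_cast h)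
  have conv5 : ∀ X Y : ℤ, ZMod.castHom (by norm_num : (2:ℕ) ∣ 8) (ZMod 2)
      ((X : ZMod 8) + 5*(Y : ZMod 8)) = 0 → 2 ∣ X + 5*Y := by
    intro X Y h
    have : ((X : ZMod 8) + 5*(Y : ZMod 8)) = ((X + 5*Y : ℤ) : ZMod 8) := by push_cast; ring
    rw [this, map_intCast] at h
    exact_mod_cast (ZMod.intCast_zmod_eq_zero_iff_dvd _ 2).mp (by exact_mod_cast h)
  obtain ⟨a2, b2, c2⟩ := h2
  obtain ⟨a5, b5, c5⟩ := h5
  have d1 := conv2 _ _ a2; have d1' := conv5 _ _ a5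
  have d2 := conv2 _ _ b2; have d2' := conv5 _ _ b5
  have d3 := conv2 _ _ c2; have d3' := conv5 _ _ c5
  omega

lemma int_nosol (p q : ℕ) (hp : p % 8 = 3 ∨ p % 8 = 7) (hq : q % 8 = 3 ∨ q % 8 = 7) :
    ∀ n : ℕ, ∀ X₁ Y₁ X₂ Y₂ X₃ Y₃ : ℤ,
    X₁.natAbs + Y₁.natAbs + X₂.natAbs + Y₂.natAbs + X₃.natAbs + Y₃.natAbs ≤ n →
    (X₁^2 - 2*Y₁^2 - p*(X₂^2-2*Y₂^2) - q*(X₃^2-2*Y₃^2) = 0) →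
    (2*X₁*Y₁ - Y₁^2 - p*(2*X₂*Y₂-Y₂^2) - q*(2*X₃*Y₃-Y₃^2) = 0) →
    X₁ = 0 ∧ Y₁ = 0 ∧ X₂ = 0 ∧ Y₂ = 0 ∧ X₃ = 0 ∧ Y₃ = 0 := by
  intro n
  induction n using Nat.strong_induction_on with
  | _ n ih =>
    intro X₁ Y₁ X₂ Y₂ X₃ Y₃ hle E₁ E₂
    obtain ⟨d1, d2, d3, d4, d5, d6⟩ := int_step p q hp hq X₁ Y₁ X₂ Y₂ X₃ Y₃ E₁ E₂
    obtain ⟨x₁, rfl⟩ := d1; obtain ⟨y₁, rfl⟩ := d2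
    obtain ⟨x₂, rfl⟩ := d3; obtain ⟨y₂, rfl⟩ := d4
    obtain ⟨x₃, rfl⟩ := d5; obtain ⟨y₃, rfl⟩ := d6
    by_cases hz : x₁ = 0 ∧ y₁ = 0 ∧ x₂ = 0 ∧ y₂ = 0 ∧ x₃ = 0 ∧ y₃ = 0
    · obtain ⟨rfl, rfl, rfl, rfl, rfl, rfl⟩ := hz; norm_num
    · have hlt : x₁.natAbs + y₁.natAbs + x₂.natAbs + y₂.natAbs + x₃.natAbs + y₃.natAbs < n := by
        clear E₁ E₂ ih
        norm_num [Int.natAbs_mul] at hle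
        omega
      have E₁' : x₁^2 - 2*y₁^2 - p*(x₂^2-2*y₂^2) - q*(x₃^2-2*y₃^2) = 0 := by
        have h4 : (4:ℤ) * (x₁^2 - 2*y₁^2 - p*(x₂^2-2*y₂^2) - q*(x₃^2-2*y₃^2)) = 0 := by
          linear_combination E₁
        linarith
      have E₂' : 2*x₁*y₁ - y₁^2 - p*(2*x₂*y₂-y₂^2) - q*(2*x₃*y₃-y₃^2) = 0 := by
        have h4 : (4:ℤ) * (2*x₁*y₁ - y₁^2 - p*(2*x₂*y₂-y₂^2) - q*(2*x₃*y₃-y₃^2)) = 0 := by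
          linear_combination E₂
        linarith
      obtain ⟨rfl, rfl, rfl, rfl, rfl, rfl⟩ := ih _ hlt x₁ y₁ x₂ y₂ x₃ y₃ le_rfl E₁' E₂'
      norm_num

lemma rat_clear (x : ℚ) (k : ℕ) (h : x.den ∣ k) : ∃ m : ℤ, x * (k : ℚ) = (m : ℚ) := by
  obtain ⟨c, rfl⟩ := h
  refine ⟨x.num * c, ?_⟩
  have hd : (x.den : ℚ) ≠ 0 := by exact_mod_cast x.den_nz
  have h1 : x * (x.den : ℚ) = (x.num : ℚ) := by
    nth_rewrite 1 [← Rat.num_div_den x]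
    exact div_mul_cancel₀ _ hd
  push_cast
  calc x * ((x.den : ℚ) * c) = (x * (x.den : ℚ)) * c := by ring
  _ = (x.num : ℚ) * c := by rw [h1]

lemma rat_nosol (p q : ℕ) (hp : p % 8 = 3 ∨ p % 8 = 7) (hq : q % 8 = 3 ∨ q % 8 = 7)
    (X₁ Y₁ X₂ Y₂ X₃ Y₃ : ℚ)
    (E₁ : X₁^2 - 2*Y₁^2 - p*(X₂^2-2*Y₂^2) - q*(X₃^2-2*Y₃^2) = 0)
    (E₂ : 2*X₁*Y₁ - Y₁^2 - p*(2*X₂*Y₂-Y₂^2) - q*(2*X₃*Y₃-Y₃^2) = 0) :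
    X₁ = 0 ∧ Y₁ = 0 ∧ X₂ = 0 ∧ Y₂ = 0 ∧ X₃ = 0 ∧ Y₃ = 0 := by
  set k : ℕ := X₁.den * Y₁.den * X₂.den * Y₂.den * X₃.den * Y₃.den with hk
  have hk0 : (k : ℚ) ≠ 0 := by
    have h : k ≠ 0 := by
      have := X₁.den_nz; have := Y₁.den_nz; have := X₂.den_nz
      have := Y₂.den_nz; have := X₃.den_nz; have := Y₃.den_nz
      simp only [hk]
      positivity
    exact_mod_cast h
  obtain ⟨a₁, ha₁⟩ := rat_clear X₁ k ⟨Y₁.den * X₂.den * Y₂.den * X₃.den * Y₃.den, by rw [hk]; ring⟩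
  obtain ⟨b₁, hb₁⟩ := rat_clear Y₁ k ⟨X₁.den * X₂.den * Y₂.den * X₃.den * Y₃.den, by rw [hk]; ring⟩
  obtain ⟨a₂, ha₂⟩ := rat_clear X₂ k ⟨X₁.den * Y₁.den * Y₂.den * X₃.den * Y₃.den, by rw [hk]; ring⟩
  obtain ⟨b₂, hb₂⟩ := rat_clear Y₂ k ⟨X₁.den * Y₁.den * X₂.den * X₃.den * Y₃.den, by rw [hk]; ring⟩
  obtain ⟨a₃, ha₃⟩ := rat_clear X₃ k ⟨X₁.den * Y₁.den * X₂.den * Y₂.den * Y₃.den, by rw [hk]; ring⟩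
  obtain ⟨b₃, hb₃⟩ := rat_clear Y₃ k ⟨X₁.den * Y₁.den * X₂.den * Y₂.den * X₃.den, by rw [hk]; ring⟩
  have F₁ : (a₁:ℚ)^2 - 2*b₁^2 - p*(a₂^2-2*b₂^2) - q*(a₃^2-2*b₃^2) = 0 := by
    rw [← ha₁, ← hb₁, ← ha₂, ← hb₂, ← ha₃, ← hb₃]
    linear_combination (k:ℚ)^2 * E₁
  have F₂ : 2*(a₁:ℚ)*b₁ - b₁^2 - p*(2*a₂*b₂-b₂^2) - q*(2*a₃*b₃-b₃^2) = 0 := by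
    rw [← ha₁, ← hb₁, ← ha₂, ← hb₂, ← ha₃, ← hb₃]
    linear_combination (k:ℚ)^2 * E₂
  have F₁' : a₁^2 - 2*b₁^2 - p*(a₂^2-2*b₂^2) - q*(a₃^2-2*b₃^2) = 0 := by exact_mod_cast F₁
  have F₂' : 2*a₁*b₁ - b₁^2 - p*(2*a₂*b₂-b₂^2) - q*(2*a₃*b₃-b₃^2) = 0 := by exact_mod_cast F₂
  obtain ⟨z1, z2, z3, z4, z5, z6⟩ := int_nosol p q hp hq
    (a₁.natAbs + b₁.natAbs + a₂.natAbs + b₂.natAbs + a₃.natAbs + b₃.natAbs)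
    a₁ b₁ a₂ b₂ a₃ b₃ le_rfl F₁' F₂'
  subst z1 z2 z3 z4 z5 z6
  push_cast at ha₁ hb₁ ha₂ hb₂ ha₃ hb₃
  exact ⟨(mul_eq_zero.mp ha₁).resolve_right hk0, (mul_eq_zero.mp hb₁).resolve_right hk0,
    (mul_eq_zero.mp ha₂).resolve_right hk0, (mul_eq_zero.mp hb₂).resolve_right hk0,
    (mul_eq_zero.mp ha₃).resolve_right hk0, (mul_eq_zero.mp hb₃).resolve_right hk0⟩

open Polynomial

lemma zeta_sum {ζ : ℂ} (hζ : IsPrimitiveRoot ζ 7) :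
    1+ζ+ζ^2+ζ^3+ζ^4+ζ^5+ζ^6 = 0 := by
  have h7 : ζ^7 = 1 := hζ.pow_eq_one
  have hne : ζ - 1 ≠ 0 := sub_ne_zero.mpr (hζ.ne_one (by norm_num))
  have h : (ζ - 1) * (1+ζ+ζ^2+ζ^3+ζ^4+ζ^5+ζ^6) = 0 := by linear_combination h7
  exact (mul_eq_zero.mp h).resolve_left hne

lemma eta_sq {ζ : ℂ} (hζ : IsPrimitiveRoot ζ 7) :
    (ζ+ζ^2+ζ^4)^2 = -(ζ+ζ^2+ζ^4) - 2 := by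
  have h7 : ζ^7 = 1 := hζ.pow_eq_one
  have hs := zeta_sum hζ
  linear_combination ζ*h7 + 2*hs

lemma conj_root {ζ : ℂ} (hζ : IsPrimitiveRoot ζ 7) (P : ℚ[X])
    (h : aeval ζ P = 0) {k : ℕ} (hk : Nat.Coprime k 7) : aeval (ζ^k) P = 0 := by
  have hmin : Polynomial.cyclotomic 7 ℚ = minpoly ℚ ζ :=
    Polynomial.cyclotomic_eq_minpoly_rat hζ (by norm_num)
  have hζk : IsPrimitiveRoot (ζ^k) 7 := hζ.pow_of_coprime k hk
  have hmink : Polynomial.cyclotomic 7 ℚ = minpoly ℚ (ζ^k) :=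
    Polynomial.cyclotomic_eq_minpoly_rat hζk (by norm_num)
  have hdvd : minpoly ℚ ζ ∣ P := minpoly.dvd ℚ ζ h
  obtain ⟨R, hR⟩ := hdvd
  rw [hR, map_mul, ← hmin, hmink, minpoly.aeval, zero_mul]

lemma pow_mod7 {ζ : ℂ} (hζ : IsPrimitiveRoot ζ 7) (n : ℕ) : ζ^n = ζ^(n%7) := by
  conv_lhs => rw [← Nat.div_add_mod n 7]
  rw [pow_add, pow_mul, hζ.pow_eq_one, one_pow, one_mul]

lemma trace_mem {ζ : ℂ} (hζ : IsPrimitiveRoot ζ 7) (U : ℚ[X])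
    (h2 : aeval (ζ^2) U = aeval ζ U) (h4 : aeval (ζ^4) U = aeval ζ U) :
    ∃ x y : ℚ, aeval ζ U = (x:ℂ) + (y:ℂ)*(ζ+ζ^2+ζ^4) := by
  set η : ℂ := ζ+ζ^2+ζ^4 with hη
  set S : Submodule ℚ ℂ := Submodule.span ℚ {1, η} with hS
  have hterm : ∀ i : ℕ, (ζ^i + (ζ^2)^i + (ζ^4)^i) ∈ S := by
    intro i
    have e2 : (ζ^2)^i = ζ^((2*i)%7) := by rw [← pow_mul, pow_mod7 hζ]
    have e4 : (ζ^4)^i = ζ^((4*i)%7) := by rw [← pow_mul, pow_mod7 hζ]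
    have e1 : ζ^i = ζ^(i%7) := pow_mod7 hζ i
    have m2 : (2*i)%7 = (2*(i%7))%7 := by omega
    have m4 : (4*i)%7 = (4*(i%7))%7 := by omega
    rw [e1, e2, e4, m2, m4]
    have hm : i % 7 < 7 := Nat.mod_lt _ (by norm_num)
    set m := i % 7 with hmdef
    clear_value m
    have hsum := zeta_sum hζ
    interval_cases m <;> norm_num
    · exact Submodule.mem_span_pair.mpr ⟨3, 0, by push_cast [Rat.smul_def]; ring⟩
    · exact Submodule.mem_span_pair.mpr ⟨0, 1, by push_cast [Rat.smul_def, hη]; ring⟩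
    · exact Submodule.mem_span_pair.mpr ⟨0, 1, by push_cast [Rat.smul_def, hη]; ring⟩
    · exact Submodule.mem_span_pair.mpr ⟨-1, -1, by push_cast [Rat.smul_def, hη]; linear_combination -hsum⟩
    · exact Submodule.mem_span_pair.mpr ⟨0, 1, by push_cast [Rat.smul_def, hη]; ring⟩
    · exact Submodule.mem_span_pair.mpr ⟨-1, -1, by push_cast [Rat.smul_def, hη]; linear_combination -hsum⟩
    · exact Submodule.mem_span_pair.mpr ⟨-1, -1, by push_cast [Rat.smul_def, hη]; linear_combination -hsum⟩
  have hu : aeval ζ U ∈ S := by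
    have key : aeval ζ U = (1/3 : ℚ) • ((aeval ζ U) + (aeval (ζ^2) U) + (aeval (ζ^4) U)) := by
      rw [h2, h4, Rat.smul_def]; push_cast; ring
    rw [key, Polynomial.aeval_eq_sum_range (x := ζ), Polynomial.aeval_eq_sum_range (x := ζ^2),
      Polynomial.aeval_eq_sum_range (x := ζ^4)]
    rw [← Finset.sum_add_distrib, ← Finset.sum_add_distrib]
    refine Submodule.smul_mem _ _ (Submodule.sum_mem _ fun i _ => ?_)
    have : U.coeff i • ζ^i + U.coeff i • (ζ^2)^i + U.coeff i • (ζ^4)^i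
        = U.coeff i • (ζ^i + (ζ^2)^i + (ζ^4)^i) := by rw [smul_add, smul_add]
    rw [this]
    exact Submodule.smul_mem _ _ (hterm i)
  obtain ⟨x, y, hxy⟩ := Submodule.mem_span_pair.mp hu
  exact ⟨x, y, by rw [← hxy, Rat.smul_def, Rat.smul_def]; push_cast; ring⟩

open Polynomial

section
variable {ζ : ℂ} (hζ : IsPrimitiveRoot ζ 7)

lemma indep (hζ : IsPrimitiveRoot ζ 7) (A B : ℚ)
    (h : (A:ℂ) + (B:ℂ)*(ζ+ζ^2+ζ^4) = 0) : A = 0 ∧ B = 0 := by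
  have hη := by
    have h7 : ζ^7 = 1 := hζ.pow_eq_one
    exact (by linear_combination ζ*h7 + 2*(by
      have hne : ζ - 1 ≠ 0 := sub_ne_zero.mpr (hζ.ne_one (by norm_num))
      have hgeo : (ζ - 1) * (1+ζ+ζ^2+ζ^3+ζ^4+ζ^5+ζ^6) = 0 := by linear_combination h7
      exact (mul_eq_zero.mp hgeo).resolve_left hne :
        1+ζ+ζ^2+ζ^3+ζ^4+ζ^5+ζ^6 = 0) :
      (ζ+ζ^2+ζ^4)^2 = -(ζ+ζ^2+ζ^4) - 2)
  by_cases hB : B = 0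
  · subst hB
    norm_num at h
    exact ⟨by exact_mod_cast h, rfl⟩
  · exfalso
    have hBc : (B:ℂ) ≠ 0 := by exact_mod_cast hB
    have hsol : (ζ+ζ^2+ζ^4) = ((-A/B : ℚ) : ℂ) := by
      push_cast
      rw [eq_div_iff hBc]
      linear_combination h
    set r : ℚ := -A/B with hr
    have : ((r^2 + r + 2 : ℚ) : ℂ) = 0 := by
      push_cast
      rw [← hsol]
      linear_combination hη
    have hr2 : r^2 + r + 2 = 0 := by exact_mod_cast this
    nlinarith [sq_nonneg (2*r+1)]
end

lemma final_step (hζ : IsPrimitiveRoot ζ 7) (p q : ℕ)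
    (hp : p % 8 = 3 ∨ p % 8 = 7) (hq : q % 8 = 3 ∨ q % 8 = 7) (u v w : ℂ)
    (hu : ∃ x y : ℚ, u = (x:ℂ) + (y:ℂ)*(ζ+ζ^2+ζ^4))
    (hv : ∃ x y : ℚ, v = (x:ℂ) + (y:ℂ)*(ζ+ζ^2+ζ^4))
    (hw : ∃ x y : ℚ, w = (x:ℂ) + (y:ℂ)*(ζ+ζ^2+ζ^4))
    (heq : u^2 - p*v^2 - q*w^2 = 0)
    (hnz : ¬(u = 0 ∧ v = 0 ∧ w = 0)) : False := by
  have hη : (ζ+ζ^2+ζ^4)^2 = -(ζ+ζ^2+ζ^4) - 2 := eta_sq hζ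
  obtain ⟨X₁, Y₁, hu⟩ := hu
  obtain ⟨X₂, Y₂, hv⟩ := hv
  obtain ⟨X₃, Y₃, hw⟩ := hw
  subst hu hv hw
  have key : ((X₁^2 - 2*Y₁^2 - p*(X₂^2-2*Y₂^2) - q*(X₃^2-2*Y₃^2) : ℚ) : ℂ)
      + ((2*X₁*Y₁ - Y₁^2 - p*(2*X₂*Y₂-Y₂^2) - q*(2*X₃*Y₃-Y₃^2) : ℚ) : ℂ)*(ζ+ζ^2+ζ^4) = 0 := by
    push_cast
    linear_combination heq - ((Y₁:ℂ)^2 - (p:ℂ)*(Y₂:ℂ)^2 - (q:ℂ)*(Y₃:ℂ)^2)*hη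
  obtain ⟨hA, hB⟩ := indep hζ _ _ key
  obtain ⟨z1, z2, z3, z4, z5, z6⟩ := rat_nosol p q hp hq X₁ Y₁ X₂ Y₂ X₃ Y₃ hA hB
  subst z1 z2 z3 z4 z5 z6
  norm_num at hnz

lemma comp_eval (x y : ℂ) (P : ℚ[X]) (k : ℕ) (hxy : x^k = y) :
    aeval x (P.comp ((X : ℚ[X])^k)) = aeval y P := by
  rw [aeval_comp, map_pow, aeval_X, hxy]

lemma main_case {ζ : ℂ} (hζ : IsPrimitiveRoot ζ 7) (p q : ℕ)
    (hp : p % 8 = 3 ∨ p % 8 = 7) (hq : q % 8 = 3 ∨ q % 8 = 7) (hq0 : q ≠ 0)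
    (P Q R : ℚ[X])
    (hE : (aeval ζ P)^2 - p*(aeval ζ Q)^2 - q*(aeval ζ R)^2 = 0)
    (hR : aeval ζ R ≠ 0) : False := by
  have h7 : ζ^7 = 1 := hζ.pow_eq_one
  have h2p : IsPrimitiveRoot (ζ^2) 7 := hζ.pow_of_coprime 2 (by norm_num)
  have h4p : IsPrimitiveRoot (ζ^4) 7 := hζ.pow_of_coprime 4 (by norm_num)
  have h24 : (ζ^2)^2 = ζ^4 := by ring
  have h28 : (ζ^2)^4 = ζ := by
    have : (ζ^2)^4 = ζ^7 * ζ := by ring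
    rw [this, h7, one_mul]
  have h42 : (ζ^4)^2 = ζ := by
    have : (ζ^4)^2 = ζ^7 * ζ := by ring
    rw [this, h7, one_mul]
  have h44 : (ζ^4)^4 = ζ^2 := by
    have : (ζ^4)^4 = (ζ^7)^2 * ζ^2 := by ring
    rw [this, h7, one_pow, one_mul]
  set E : ℚ[X] := P^2 - C (p:ℚ) * Q^2 - C (q:ℚ) * R^2 with hEdef
  have hEval : ∀ x : ℂ, aeval x E =
      (aeval x P)^2 - p*(aeval x Q)^2 - q*(aeval x R)^2 := by
    intro x
    simp only [hEdef, map_sub, map_mul, map_pow, aeval_C]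
    push_cast
    ring
  have hE1 : aeval ζ E = 0 := by rw [hEval]; exact hE
  have hE2 : aeval (ζ^2) E = 0 := conj_root hζ E hE1 (by norm_num)
  have hE4 : aeval (ζ^4) E = 0 := conj_root hζ E hE1 (by norm_num)
  rw [hEval] at hE2 hE4
  set a₁ := aeval ζ P; set a₂ := aeval (ζ^2) P; set a₃ := aeval (ζ^4) P
  set b₁ := aeval ζ Q; set b₂ := aeval (ζ^2) Q; set b₃ := aeval (ζ^4) Q
  set c₁ := aeval ζ R; set c₂ := aeval (ζ^2) R; set c₃ := aeval (ζ^4) R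
  have hc₂ : c₂ ≠ 0 := by
    intro h0
    have h' := conj_root h2p R h0 (k := 4) (by norm_num)
    rw [h28] at h'
    exact hR h'
  have hc₃ : c₃ ≠ 0 := by
    intro h0
    have h' := conj_root h4p R h0 (k := 2) (by norm_num)
    rw [h42] at h'
    exact hR h'
  set u : ℂ := a₁*a₂*a₃ + p*(a₁*b₂*b₃ + b₁*a₂*b₃ + b₁*b₂*a₃) with hudef
  set v : ℂ := a₁*a₂*b₃ + a₁*b₂*a₃ + b₁*a₂*a₃ + p*(b₁*b₂*b₃) with hvdef
  set w : ℂ := q*(c₁*c₂*c₃) with hwdef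
  have heq : u^2 - p*v^2 - q*w^2 = 0 := by
    rw [hudef, hvdef, hwdef]
    linear_combination ((a₂^2-p*b₂^2)*(a₃^2-p*b₃^2))*hE +
      ((q:ℂ)*c₁^2*(a₃^2-p*b₃^2))*hE2 + ((q:ℂ)^2*c₁^2*c₂^2)*hE4
  have hw0 : w ≠ 0 := by
    have hqc : (q:ℂ) ≠ 0 := Nat.cast_ne_zero.mpr hq0
    rw [hwdef]
    exact mul_ne_zero hqc (mul_ne_zero (mul_ne_zero hR hc₂) hc₃)
  set X2 : ℚ[X] := (X : ℚ[X])^2 with hX2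
  set X4 : ℚ[X] := (X : ℚ[X])^4 with hX4
  set U : ℚ[X] := P*(P.comp X2)*(P.comp X4) + C (p:ℚ) *
      (P*(Q.comp X2)*(Q.comp X4) + Q*(P.comp X2)*(Q.comp X4) + Q*(Q.comp X2)*(P.comp X4))
    with hUdef
  set V : ℚ[X] := P*(P.comp X2)*(Q.comp X4) + P*(Q.comp X2)*(P.comp X4)
      + Q*(P.comp X2)*(P.comp X4) + C (p:ℚ) * (Q*(Q.comp X2)*(Q.comp X4)) with hVdef
  set W : ℚ[X] := C (q:ℚ) * (R*(R.comp X2)*(R.comp X4)) with hWdef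
  have hu : ∃ x y : ℚ, u = (x:ℂ) + (y:ℂ)*(ζ+ζ^2+ζ^4) := by
    have e1 : aeval ζ U = u := by
      simp only [hUdef, map_add, map_mul, aeval_C, hX2, hX4,
        comp_eval ζ (ζ^2) _ 2 rfl, comp_eval ζ (ζ^4) _ 4 rfl]
      push_cast [hudef]; ring
    have e2 : aeval (ζ^2) U = u := by
      simp only [hUdef, map_add, map_mul, aeval_C, hX2, hX4,
        comp_eval (ζ^2) (ζ^4) _ 2 h24, comp_eval (ζ^2) ζ _ 4 h28]
      push_cast [hudef]; ring
    have e4 : aeval (ζ^4) U = u := by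
      simp only [hUdef, map_add, map_mul, aeval_C, hX2, hX4,
        comp_eval (ζ^4) ζ _ 2 h42, comp_eval (ζ^4) (ζ^2) _ 4 h44]
      push_cast [hudef]; ring
    rw [← e1]; exact trace_mem hζ U (by rw [e1, e2]) (by rw [e1, e4])
  have hv : ∃ x y : ℚ, v = (x:ℂ) + (y:ℂ)*(ζ+ζ^2+ζ^4) := by
    have e1 : aeval ζ V = v := by
      simp only [hVdef, map_add, map_mul, aeval_C, hX2, hX4,
        comp_eval ζ (ζ^2) _ 2 rfl, comp_eval ζ (ζ^4) _ 4 rfl]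
      push_cast [hvdef]; ring
    have e2 : aeval (ζ^2) V = v := by
      simp only [hVdef, map_add, map_mul, aeval_C, hX2, hX4,
        comp_eval (ζ^2) (ζ^4) _ 2 h24, comp_eval (ζ^2) ζ _ 4 h28]
      push_cast [hvdef]; ring
    have e4 : aeval (ζ^4) V = v := by
      simp only [hVdef, map_add, map_mul, aeval_C, hX2, hX4,
        comp_eval (ζ^4) ζ _ 2 h42, comp_eval (ζ^4) (ζ^2) _ 4 h44]
      push_cast [hvdef]; ring
    rw [← e1]; exact trace_mem hζ V (by rw [e1, e2]) (by rw [e1, e4])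
  have hw : ∃ x y : ℚ, w = (x:ℂ) + (y:ℂ)*(ζ+ζ^2+ζ^4) := by
    have e1 : aeval ζ W = w := by
      simp only [hWdef, map_add, map_mul, aeval_C, hX2, hX4,
        comp_eval ζ (ζ^2) _ 2 rfl, comp_eval ζ (ζ^4) _ 4 rfl]
      push_cast [hwdef]; ring
    have e2 : aeval (ζ^2) W = w := by
      simp only [hWdef, map_add, map_mul, aeval_C, hX2, hX4,
        comp_eval (ζ^2) (ζ^4) _ 2 h24, comp_eval (ζ^2) ζ _ 4 h28]
      push_cast [hwdef]; ring
    have e4 : aeval (ζ^4) W = w := by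
      simp only [hWdef, map_add, map_mul, aeval_C, hX2, hX4,
        comp_eval (ζ^4) ζ _ 2 h42, comp_eval (ζ^4) (ζ^2) _ 4 h44]
      push_cast [hwdef]; ring
    rw [← e1]; exact trace_mem hζ W (by rw [e1, e2]) (by rw [e1, e4])
  exact final_step hζ p q hp hq u v w hu hv hw heq (by tauto)

lemma sq_case {ζ : ℂ} (hζ : IsPrimitiveRoot ζ 7) (p q : ℕ)
    (hp : p % 8 = 3 ∨ p % 8 = 7) (hq : q % 8 = 3 ∨ q % 8 = 7) (hp0 : p ≠ 0)
    (S : ℚ[X]) (hS : (aeval ζ S)^2 = (p:ℂ)) : False := by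
  have h7 : ζ^7 = 1 := hζ.pow_eq_one
  have h24 : (ζ^2)^2 = ζ^4 := by ring
  have h28 : (ζ^2)^4 = ζ := by
    have : (ζ^2)^4 = ζ^7 * ζ := by ring
    rw [this, h7, one_mul]
  have h42 : (ζ^4)^2 = ζ := by
    have : (ζ^4)^2 = ζ^7 * ζ := by ring
    rw [this, h7, one_mul]
  have h44 : (ζ^4)^4 = ζ^2 := by
    have : (ζ^4)^4 = (ζ^7)^2 * ζ^2 := by ring
    rw [this, h7, one_pow, one_mul]
  set E : ℚ[X] := S^2 - C (p:ℚ) with hEdef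
  have hEval : ∀ x : ℂ, aeval x E = (aeval x S)^2 - (p:ℂ) := by
    intro x
    simp only [hEdef, map_sub, map_pow, aeval_C]
    push_cast
    ring
  have hE1 : aeval ζ E = 0 := by rw [hEval, hS]; ring
  have hE2 : aeval (ζ^2) E = 0 := conj_root hζ E hE1 (by norm_num)
  have hE4 : aeval (ζ^4) E = 0 := conj_root hζ E hE1 (by norm_num)
  rw [hEval] at hE2 hE4
  set s₁ := aeval ζ S; set s₂ := aeval (ζ^2) S; set s₃ := aeval (ζ^4) S
  set u : ℂ := s₁*s₂*s₃ with hudef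
  have heq : u^2 - p*(p:ℂ)^2 - q*(0:ℂ)^2 = 0 := by
    rw [hudef]
    have e2 : s₂^2 = (p:ℂ) := by linear_combination hE2
    have e4 : s₃^2 = (p:ℂ) := by linear_combination hE4
    calc (s₁*s₂*s₃)^2 - p*(p:ℂ)^2 - q*(0:ℂ)^2 = s₁^2*s₂^2*s₃^2 - p*(p:ℂ)^2 := by ring
    _ = 0 := by rw [hS, e2, e4]; ring
  set X2 : ℚ[X] := (X : ℚ[X])^2 with hX2
  set X4 : ℚ[X] := (X : ℚ[X])^4 with hX4
  set U : ℚ[X] := S*(S.comp X2)*(S.comp X4) with hUdef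
  have hu : ∃ x y : ℚ, u = (x:ℂ) + (y:ℂ)*(ζ+ζ^2+ζ^4) := by
    have e1 : aeval ζ U = u := by
      simp only [hUdef, map_mul, hX2, hX4,
        comp_eval ζ (ζ^2) _ 2 rfl, comp_eval ζ (ζ^4) _ 4 rfl]
      exact hudef.symm
    have e2 : aeval (ζ^2) U = u := by
      simp only [hUdef, map_mul, hX2, hX4,
        comp_eval (ζ^2) (ζ^4) _ 2 h24, comp_eval (ζ^2) ζ _ 4 h28]
      rw [hudef]; ring
    have e4 : aeval (ζ^4) U = u := by
      simp only [hUdef, map_mul, hX2, hX4,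
        comp_eval (ζ^4) ζ _ 2 h42, comp_eval (ζ^4) (ζ^2) _ 4 h44]
      rw [hudef]; ring
    rw [← e1]; exact trace_mem hζ U (by rw [e1, e2]) (by rw [e1, e4])
  have hv : ∃ x y : ℚ, (p:ℂ) = (x:ℚ) + (y:ℚ)*(ζ+ζ^2+ζ^4) := by
    exact ⟨(p:ℚ), 0, by push_cast; ring⟩
  have hw : ∃ x y : ℚ, (0:ℂ) = (x:ℚ) + (y:ℚ)*(ζ+ζ^2+ζ^4) := ⟨0, 0, by norm_num⟩
  have hpc : (p:ℂ) ≠ 0 := Nat.cast_ne_zero.mpr hp0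
  exact final_step hζ p q hp hq u (p:ℂ) 0 hu hv hw heq (by tauto)

lemma ternary {F : Type*} [Field F] (p q t x y z : F)
    (h : t^2 - p*x^2 - q*y^2 + p*q*z^2 = 0) (hnz : ¬(t=0 ∧ x=0 ∧ y=0 ∧ z=0)) :
    ∃ a b c : F, ¬(a=0 ∧ b=0 ∧ c=0) ∧ a^2 - p*b^2 - q*c^2 = 0 := by
  by_cases h1 : y^2 - p*z^2 = 0
  · by_cases hz : z = 0
    · have hy : y = 0 := by
        have hy2 : y^2 = 0 := by rw [hz] at h1; simpa using h1
        exact pow_eq_zero_iff (by norm_num) |>.mp hy2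
      refine ⟨t, x, 0, by tauto, ?_⟩
      rw [hy, hz] at h
      linear_combination h
    · refine ⟨y, z, 0, by tauto, ?_⟩
      linear_combination h1
  · refine ⟨t*y - p*x*z, x*y - t*z, y^2 - p*z^2, ?_, ?_⟩
    · intro hcon
      exact h1 hcon.2.2
    · linear_combination (y^2 - p*z^2)*h

lemma mem_poly {ζ : ℂ} (hζ : IsPrimitiveRoot ζ 7)
    (k : ↥(IntermediateField.adjoin ℚ {ζ})) : ∃ P : ℚ[X], aeval ζ P = (k : ℂ) := by
  have hint : IsIntegral ℚ ζ :=
    ⟨X^7 - C 1, monic_X_pow_sub_C 1 (by norm_num), by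
      simp [eval₂_sub, eval₂_pow, hζ.pow_eq_one]⟩
  have h1 : (IntermediateField.adjoin ℚ {ζ}).toSubalgebra = Algebra.adjoin ℚ {ζ} :=
    IntermediateField.adjoin_simple_toSubalgebra_of_isAlgebraic hint.isAlgebraic
  have h2 : (k:ℂ) ∈ Algebra.adjoin ℚ {ζ} := by
    rw [← h1]
    exact k.2
  rw [Algebra.adjoin_singleton_eq_range_aeval] at h2
  obtain ⟨P, hP⟩ := h2
  exact ⟨P, hP⟩


theorem division_quaternion_over_seventh_cyclotomic (p₁ p₂ : ℕ)
    (hp₁ : p₁.Prime) (hp₂ : p₂.Prime) (hodd₁ : Odd p₁) (hodd₂ : Odd p₂)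
    (hne : p₁ ≠ p₂) (hmod₁ : p₁ % 4 = 3) (hmod₂ : p₂ % 4 = 3) :
    let K : IntermediateField ℚ ℂ :=
      IntermediateField.adjoin ℚ {Complex.exp (2 * Real.pi * Complex.I / 7)}
    ∀ x : ℍ[↥K, (p₁ : ↥K), (p₂ : ↥K)], x ≠ 0 → IsUnit x := by
  intro K x hx
  have hζ : IsPrimitiveRoot (Complex.exp (2 * Real.pi * Complex.I / 7)) 7 := by
    simpa using Complex.isPrimitiveRoot_exp 7 (by norm_num)
  set ζ : ℂ := Complex.exp (2 * Real.pi * Complex.I / 7) with hζdef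
  have hp8 : p₁ % 8 = 3 ∨ p₁ % 8 = 7 := by omega
  have hq8 : p₂ % 8 = 3 ∨ p₂ % 8 = 7 := by omega
  have hp0 : p₁ ≠ 0 := hp₁.ne_zero
  have hq0 : p₂ ≠ 0 := hp₂.ne_zero
  obtain ⟨N, hNdef⟩ : ∃ N : ↥K,
      N = x.re^2 - (p₁:↥K)*x.imI^2 - (p₂:↥K)*x.imJ^2 + (p₁:↥K)*(p₂:↥K)*x.imK^2 := ⟨_, rfl⟩
  have hN : N ≠ 0 := by
    intro hN0
    have hcomp : ¬(x.re = 0 ∧ x.imI = 0 ∧ x.imJ = 0 ∧ x.imK = 0) := by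
      rintro ⟨h1, h2, h3, h4⟩
      exact hx (QuaternionAlgebra.ext (by simpa using h1) (by simpa using h2)
        (by simpa using h3) (by simpa using h4))
    have heq : x.re^2 - (p₁:↥K)*x.imI^2 - (p₂:↥K)*x.imJ^2 + (p₁:↥K)*(p₂:↥K)*x.imK^2 = 0 := by
      rw [← hNdef]; exact hN0
    obtain ⟨a, b, c, habc, hconic⟩ :=
      ternary (p₁ : ↥K) (p₂ : ↥K) x.re x.imI x.imJ x.imK heq hcomp
    have hC : (a:ℂ)^2 - (p₁:ℂ)*(b:ℂ)^2 - (p₂:ℂ)*(c:ℂ)^2 = 0 := by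
      have := congrArg (fun t : ↥K => (t : ℂ)) hconic
      push_cast at this
      convert this using 2 <;> norm_num
    by_cases hc : c = 0
    · have hb : b ≠ 0 := by
        intro hb0
        apply habc
        refine ⟨?_, hb0, hc⟩
        have : a^2 = 0 := by rw [hb0, hc] at hconic; linear_combination hconic
        exact pow_eq_zero_iff (by norm_num) |>.mp this
      set s : ↥K := a * b⁻¹ with hsdef
      have hs : s^2 = (p₁ : ↥K) := by
        rw [hsdef]
        have hbin : b⁻¹ * b = 1 := inv_mul_cancel₀ hb
        field_simp
        rw [hc] at hconic
        linear_combination hconic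
      have hsC : ((s:ℂ))^2 = (p₁:ℂ) := by
        have := congrArg (fun t : ↥K => (t : ℂ)) hs
        push_cast at this
        convert this using 2 <;> norm_num
      obtain ⟨S, hS⟩ := mem_poly hζ s
      exact sq_case hζ p₁ p₂ hp8 hq8 hp0 S (by rw [hS]; exact hsC)
    · obtain ⟨P, hP⟩ := mem_poly hζ a
      obtain ⟨Q, hQ⟩ := mem_poly hζ b
      obtain ⟨R, hR⟩ := mem_poly hζ c
      refine main_case hζ p₁ p₂ hp8 hq8 hq0 P Q R ?_ ?_
      · rw [hP, hQ, hR]; exact hC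
      · rw [hR]
        exact_mod_cast hc
  have hNinv : N⁻¹ * N = 1 := inv_mul_cancel₀ hN
  refine isUnit_iff_exists.mpr
    ⟨⟨N⁻¹*x.re, -(N⁻¹*x.imI), -(N⁻¹*x.imJ), -(N⁻¹*x.imK)⟩, ?_, ?_⟩ <;>
  · refine QuaternionAlgebra.ext ?_ ?_ ?_ ?_ <;>
    simp only [QuaternionAlgebra.re_mul, QuaternionAlgebra.imI_mul,
      QuaternionAlgebra.imJ_mul, QuaternionAlgebra.imK_mul,
      QuaternionAlgebra.re_one, QuaternionAlgebra.imI_one,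
      QuaternionAlgebra.imJ_one, QuaternionAlgebra.imK_one] <;>
    [(linear_combination hNinv - N⁻¹ * hNdef); ring; ring; ring]
end
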